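/- arXiv:math/0404428 — 7 statements merged into one kernel-verified Lean document; each statement's English description precedes it below -/
import Mathlib

section
/- Let S be a commutative semigroup and μ an invariant mean on B(S). Let A_1, ..., A_k ⊆ S with A = ⋂_j A_j and suppose Σ_{j=1}^k μ(I_{A_j}) - k + 1 > 0. Then for every s_0 ∈ S, the translate {s_0 + t : t ∈ S} meets A, i.e., {s_0 + t : t ∈ S} ∩ A ≠ ∅. -/
open BoundedContinuousFunction
/-- The `{0,1}`-valued real indicator of a set, as an element of `B(S)`
(`S` carries the discrete topology, so `B(S)` is the space of bounded
continuous functions `S →ᵇ ℝ`). -/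
noncomputable def indBCF {S : Type*} [TopologicalSpace S] [DiscreteTopology S] (A : Set S) :
    S →ᵇ ℝ :=
  BoundedContinuousFunction.ofNormedAddCommGroup (A.indicator 1)
    continuous_of_discreteTopology 1
    (fun x => by by_cases h : x ∈ A <;> simp [Set.indicator_apply, h])

/-- The translate `(ℓ_s a)(t) = a (s + t)` as an element of `B(S)`. -/
noncomputable def transBCF {S : Type*} [AddSemigroup S] [TopologicalSpace S] [DiscreteTopology S]
    (s : S) (a : S →ᵇ ℝ) : S →ᵇ ℝ :=
  a.compContinuous ⟨fun t => s + t, continuous_of_discreteTopology⟩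

/-- Let `μ` be an invariant mean on `B(S)` and `A = ⋂_{j=1}^k A_j`.  If
`Σ_j μ(I_{A_j}) - k + 1 > 0`, then every translate `{s₀ + t : t ∈ S}` meets `A`. -/
theorem stmt4 {S : Type*} [AddCommSemigroup S] [TopologicalSpace S] [DiscreteTopology S]
    (μ : (S →ᵇ ℝ) →L[ℝ] ℝ) (hnorm : ‖μ‖ = 1) (hone : μ 1 = 1)
    (hinv : ∀ (a : S →ᵇ ℝ) (s : S), μ (transBCF s a) = μ a)
    (k : ℕ) (A : Fin k → Set S)
    (hα : 0 < (∑ j, μ (indBCF (A j))) - k + 1) :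
    ∀ s₀ : S, ((Set.range fun t => s₀ + t) ∩ ⋂ j, A j).Nonempty := by
  intro s₀
  by_contra hemp
  rw [Set.not_nonempty_iff_eq_empty] at hemp
  rcases Nat.eq_zero_or_pos k with hk | hk
  · subst hk
    have : s₀ + s₀ ∈ (Set.range fun t => s₀ + t) ∩ ⋂ j, A j := by
      refine ⟨⟨s₀, rfl⟩, ?_⟩
      simp
    rw [hemp] at this
    exact this
  have hnotin : ∀ t : S, s₀ + t ∉ ⋂ j, A j := by
    intro t ht
    have : s₀ + t ∈ (Set.range fun t => s₀ + t) ∩ ⋂ j, A j := ⟨⟨t, rfl⟩, ht⟩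
    rw [hemp] at this
    exact this
  set g : S →ᵇ ℝ := ∑ j, transBCF s₀ (indBCF (A j)) with hg
  have hμg : μ g = ∑ j, μ (indBCF (A j)) := by
    rw [hg, map_sum]
    exact Finset.sum_congr rfl fun j _ => hinv _ _
  have hgt : ∀ t, g t = ∑ j, (A j).indicator 1 (s₀ + t) := by
    intro t
    rw [hg, BoundedContinuousFunction.coe_sum, Finset.sum_apply]
    refine Finset.sum_congr rfl fun j _ => ?_
    simp [transBCF, indBCF, BoundedContinuousFunction.ofNormedAddCommGroup]
  have hub : ∀ t : S, g t ≤ (k : ℝ) - 1 := by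
    intro t
    obtain ⟨j₀, hj₀⟩ : ∃ j, s₀ + t ∉ A j := by
      by_contra h
      push_neg at h
      exact hnotin t (Set.mem_iInter.2 h)
    rw [hgt]
    rw [← Finset.add_sum_erase _ _ (Finset.mem_univ j₀)]
    have h1 : (A j₀).indicator (1 : S → ℝ) (s₀ + t) = 0 := Set.indicator_of_notMem hj₀ _
    have h2 : ∑ j ∈ Finset.univ.erase j₀, (A j).indicator (1 : S → ℝ) (s₀ + t) ≤
        ∑ _j ∈ Finset.univ.erase j₀, (1 : ℝ) := by
      refine Finset.sum_le_sum fun j _ => ?_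
      by_cases h : s₀ + t ∈ A j <;> simp [Set.indicator_apply, h]
    have h3 : ∑ _j ∈ Finset.univ.erase j₀, (1 : ℝ) = (k : ℝ) - 1 := by
      rw [Finset.sum_const]
      simp [Finset.card_erase_of_mem, Finset.card_univ]
      push_cast [Nat.cast_sub hk]
      ring
    rw [h1, zero_add]
    linarith [h2, h3.symm ▸ h2]
  have hlb : ∀ t : S, 0 ≤ g t := by
    intro t
    rw [hgt]
    refine Finset.sum_nonneg fun j _ => ?_
    by_cases h : s₀ + t ∈ A j <;> simp [Set.indicator_apply, h]
  set c : ℝ := ((k : ℝ) - 1) / 2 with hc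
  have hc0 : 0 ≤ c := by
    have : (1 : ℝ) ≤ (k : ℝ) := by exact_mod_cast hk
    rw [hc]; linarith
  have hnormh : ‖g - c • 1‖ ≤ c := by
    refine (BoundedContinuousFunction.norm_le hc0).2 fun t => ?_
    have h1 := hub t
    have h2 := hlb t
    simp only [BoundedContinuousFunction.coe_sub, BoundedContinuousFunction.coe_smul,
      BoundedContinuousFunction.coe_one, Pi.sub_apply, Pi.smul_apply, Pi.one_apply, smul_eq_mul,
      mul_one]
    rw [Real.norm_eq_abs, abs_le]
    constructor <;> [linarith; linarith]
  have hμh : |μ (g - c • 1)| ≤ c := by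
    calc |μ (g - c • 1)| ≤ ‖μ‖ * ‖g - c • 1‖ := μ.le_opNorm _
    _ = ‖g - c • 1‖ := by rw [hnorm, one_mul]
    _ ≤ c := hnormh
  have hμg' : μ g ≤ 2 * c := by
    have : μ (g - c • 1) = μ g - c := by
      rw [map_sub, map_smul, hone, smul_eq_mul, mul_one]
    rw [this, abs_le] at hμh
    linarith [hμh.2]
  rw [hμg] at hμg'
  rw [hc] at hμg'
  linarith
end

section
/- Let S be a commutative semigroup (directed as usual) and μ̃ a mean on B(S). Let A_1, ..., A_k ⊆ S, A = ⋂_j A_j, and α = Σ_{j=1}^k liminf_{s ∈ S} μ̃(t ↦ I_{A_j}(s+t)) - k + 1. If α > 0, then liminf_{s ∈ S} μ̃(t ↦ I_A(s+t)) ≥ α. -/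
open BoundedContinuousFunction
/-- Let `μ̃` be a mean on `B(S)` (`S` directed by `s ≤ t ↔ s = t ∨ ∃ u, s + u = t`,
liminf over `S` being `⨆ s₀, ⨅ s ≥ s₀`).  If
`α = Σ_j liminf_s μ̃(t ↦ I_{A_j}(s+t)) - k + 1 > 0` with `A = ⋂_j A_j`, then
`liminf_s μ̃(t ↦ I_A(s+t)) ≥ α`. -/
theorem stmt5 {S : Type*} [AddCommSemigroup S] [TopologicalSpace S] [DiscreteTopology S]
    (μ : (S →ᵇ ℝ) →L[ℝ] ℝ) (hnorm : ‖μ‖ = 1) (hone : μ 1 = 1)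
    (k : ℕ) (A : Fin k → Set S)
    (hα : 0 < (∑ j, ⨆ s₀ : S, ⨅ s : {s : S // s₀ = s ∨ ∃ u, s₀ + u = s},
        μ (transBCF s.1 (indBCF (A j)))) - k + 1) :
    (∑ j, ⨆ s₀ : S, ⨅ s : {s : S // s₀ = s ∨ ∃ u, s₀ + u = s},
        μ (transBCF s.1 (indBCF (A j)))) - k + 1
      ≤ ⨆ s₀ : S, ⨅ s : {s : S // s₀ = s ∨ ∃ u, s₀ + u = s},
        μ (transBCF s.1 (indBCF (⋂ j, A j))) := by
  classical
  clear hα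
  -- S is nonempty
  have hS : Nonempty S := by
    by_contra h
    rw [not_nonempty_iff] at h
    have h0 : (1 : S →ᵇ ℝ) = 0 := by
      ext t
      exact (h.false t).elim
    rw [h0, map_zero] at hone
    exact one_ne_zero hone.symm
  -- positivity of μ
  have hpos : ∀ g : S →ᵇ ℝ, (∀ t, 0 ≤ g t) → 0 ≤ μ g := by
    intro g hg
    have hb : ‖(‖g‖ • (1 : S →ᵇ ℝ)) - g‖ ≤ ‖g‖ := by
      apply (BoundedContinuousFunction.norm_le (norm_nonneg g)).mpr
      intro t
      have h1 : g t ≤ ‖g‖ := le_trans (le_abs_self _) (g.norm_coe_le_norm t)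
      have h2 : 0 ≤ g t := hg t
      simp only [BoundedContinuousFunction.coe_sub, BoundedContinuousFunction.coe_smul,
        BoundedContinuousFunction.coe_one, Pi.sub_apply, Pi.smul_apply, Pi.one_apply,
        smul_eq_mul, mul_one, Real.norm_eq_abs]
      rw [abs_le]
      constructor <;> nlinarith [norm_nonneg g]
    have h2 := μ.le_opNorm ((‖g‖ • (1 : S →ᵇ ℝ)) - g)
    rw [hnorm, one_mul] at h2
    have h3 : μ ((‖g‖ • (1 : S →ᵇ ℝ)) - g) ≤ ‖g‖ := by
      refine le_trans (le_trans (le_abs_self _) ?_) (h2.trans hb)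
      rw [Real.norm_eq_abs]
    rw [map_sub, map_smul, hone, smul_eq_mul, mul_one] at h3
    linarith
  -- uniform bound
  have hbnd : ∀ (B : Set S) (s : S), |μ (transBCF s (indBCF B))| ≤ 1 := by
    intro B s
    have h1 : ‖transBCF s (indBCF B)‖ ≤ 1 := by
      refine le_trans (norm_compContinuous_le _ _) ?_
      exact norm_ofNormedAddCommGroup_le _ zero_le_one _
    have h2 := μ.le_opNorm (transBCF s (indBCF B))
    rw [hnorm, one_mul] at h2
    rw [← Real.norm_eq_abs]
    exact h2.trans h1
  -- pointwise key inequality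
  have hkey : ∀ s : S, (∑ j, μ (transBCF s (indBCF (A j))))
      ≤ μ (transBCF s (indBCF (⋂ j, A j))) + ((k : ℝ) - 1) := by
    intro s
    have h0 : 0 ≤ μ (transBCF s (indBCF (⋂ j, A j)) + ((k : ℝ) - 1) • (1 : S →ᵇ ℝ)
        - ∑ j, transBCF s (indBCF (A j))) := by
      apply hpos
      intro t
      have hval : ∀ B : Set S, (transBCF s (indBCF B) : S → ℝ) t
          = Set.indicator B 1 (s + t) := fun B => rfl
      simp only [BoundedContinuousFunction.coe_sub, BoundedContinuousFunction.coe_add,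
        BoundedContinuousFunction.coe_smul, BoundedContinuousFunction.coe_one,
        BoundedContinuousFunction.coe_sum, Pi.sub_apply, Pi.add_apply, Pi.smul_apply,
        Pi.one_apply, Finset.sum_apply, smul_eq_mul, mul_one]
      simp only [hval]
      by_cases hall : ∀ j, s + t ∈ A j
      · have h1 : Set.indicator (⋂ j, A j) (1 : S → ℝ) (s + t) = 1 := by
          rw [Set.indicator_of_mem (Set.mem_iInter.mpr hall)]
          rfl
        have h2 : ∀ j : Fin k, Set.indicator (A j) (1 : S → ℝ) (s + t) = 1 := by
          intro j
          rw [Set.indicator_of_mem (hall j)]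
          rfl
        rw [h1]
        rw [Finset.sum_congr rfl (fun j _ => h2 j)]
        simp
      · push_neg at hall
        obtain ⟨j₀, hj₀⟩ := hall
        have h1 : (0 : ℝ) ≤ Set.indicator (⋂ j, A j) (1 : S → ℝ) (s + t) :=
          Set.indicator_apply_nonneg (fun _ => zero_le_one)
      -- sum bound
        have h2 : (∑ j, Set.indicator (A j) (1 : S → ℝ) (s + t)) ≤ (k : ℝ) - 1 := by
          have hz : Set.indicator (A j₀) (1 : S → ℝ) (s + t) = 0 :=
            Set.indicator_of_notMem hj₀ _
          rw [← Finset.add_sum_erase (Finset.univ : Finset (Fin k))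
            (fun j => Set.indicator (A j) (1 : S → ℝ) (s + t)) (Finset.mem_univ j₀),
            hz, zero_add]
          have h3 : (∑ j ∈ Finset.univ.erase j₀, Set.indicator (A j) (1 : S → ℝ) (s + t))
              ≤ (Finset.univ.erase j₀).card • (1 : ℝ) := by
            apply Finset.sum_le_card_nsmul
            intro j _
            exact Set.indicator_apply_le' (fun _ => le_refl 1) (fun _ => zero_le_one)
          rw [Finset.card_erase_of_mem (Finset.mem_univ j₀), Finset.card_univ,
            Fintype.card_fin, nsmul_eq_mul, mul_one] at h3
          refine h3.trans ?_
          rw [Nat.cast_sub j₀.pos]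
          simp
        linarith
    rw [map_sub, map_add, map_smul, map_sum, hone, smul_eq_mul, mul_one] at h0
    linarith
  -- order-theoretic setup
  have hRtrans : ∀ a b c : S, (a = b ∨ ∃ u, a + u = b) → (b = c ∨ ∃ u, b + u = c) →
      (a = c ∨ ∃ u, a + u = c) := by
    rintro a b c (rfl | ⟨u, rfl⟩) (rfl | ⟨v, rfl⟩)
    · exact Or.inl rfl
    · exact Or.inr ⟨v, rfl⟩
    · exact Or.inr ⟨u, rfl⟩
    · exact Or.inr ⟨u + v, (add_assoc _ _ _).symm⟩
  have hne : ∀ s₀ : S, Nonempty {s : S // s₀ = s ∨ ∃ u, s₀ + u = s} :=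
    fun s₀ => ⟨⟨s₀, Or.inl rfl⟩⟩
  set F : Fin k → S → ℝ := fun j s₀ =>
    ⨅ s : {s : S // s₀ = s ∨ ∃ u, s₀ + u = s}, μ (transBCF s.1 (indBCF (A j))) with hF
  set G : S → ℝ := fun s₀ =>
    ⨅ s : {s : S // s₀ = s ∨ ∃ u, s₀ + u = s}, μ (transBCF s.1 (indBCF (⋂ j, A j))) with hG
  have hFbb : ∀ j (s₀ : S), BddBelow (Set.range fun s : {s : S // s₀ = s ∨ ∃ u, s₀ + u = s} =>
      μ (transBCF s.1 (indBCF (A j)))) := by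
    intro j s₀
    refine ⟨-1, ?_⟩
    rintro x ⟨s, rfl⟩
    linarith [abs_le.mp (hbnd (A j) s.1)]
  have hFle : ∀ j (s₀ s : S), (s₀ = s ∨ ∃ u, s₀ + u = s) →
      F j s₀ ≤ μ (transBCF s (indBCF (A j))) := by
    intro j s₀ s hs
    exact ciInf_le (hFbb j s₀) ⟨s, hs⟩
  have hFub : ∀ j (s₀ : S), F j s₀ ≤ 1 := by
    intro j s₀
    exact (hFle j s₀ s₀ (Or.inl rfl)).trans (le_of_abs_le (hbnd (A j) s₀))
  have hFmono : ∀ j (a b : S), (a = b ∨ ∃ u, a + u = b) → F j a ≤ F j b := by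
    intro j a b hab
    haveI := hne b
    apply le_ciInf
    rintro ⟨s, hs⟩
    exact hFle j a s (hRtrans a b s hab hs)
  -- step A : sum of liminf-candidates vs G
  have hstep : ∀ s₀ : S, (∑ j, F j s₀) - ((k : ℝ) - 1) ≤ G s₀ := by
    intro s₀
    haveI := hne s₀
    apply le_ciInf
    rintro ⟨s, hs⟩
    have h1 : (∑ j, F j s₀) ≤ ∑ j, μ (transBCF s (indBCF (A j))) :=
      Finset.sum_le_sum fun j _ => hFle j s₀ s hs
    linarith [hkey s]
  -- step B : sum of sups ≤ sup of sums (monotone + directed)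
  have hsum : ∀ t : Finset (Fin k),
      (∑ j ∈ t, ⨆ s₀ : S, F j s₀) ≤ ⨆ s₀ : S, ∑ j ∈ t, F j s₀ := by
    intro t
    induction t using Finset.induction with
    | empty => simp [ciSup_const]
    | @insert j t hj ih =>
      rw [Finset.sum_insert hj]
      have hHmono : ∀ a b : S, (a = b ∨ ∃ u, a + u = b) →
          (∑ i ∈ t, F i a) ≤ ∑ i ∈ t, F i b :=
        fun a b hab => Finset.sum_le_sum fun i _ => hFmono i a b hab
      have hbddT : BddAbove (Set.range fun s₀ : S => F j s₀ + ∑ i ∈ t, F i s₀) := by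
        refine ⟨1 + t.card, ?_⟩
        rintro x ⟨s₀, rfl⟩
        dsimp only
        have h1 : (∑ i ∈ t, F i s₀) ≤ ∑ i ∈ t, (1 : ℝ) :=
          Finset.sum_le_sum fun i _ => hFub i s₀
        rw [Finset.sum_const, nsmul_eq_mul, mul_one] at h1
        have := hFub j s₀
        linarith
      have key : ∀ a b : S, F j a + (∑ i ∈ t, F i b)
          ≤ ⨆ s₀ : S, (F j s₀ + ∑ i ∈ t, F i s₀) := by
        intro a b
        have h1 : F j a ≤ F j (a + b) := hFmono j a (a + b) (Or.inr ⟨b, rfl⟩)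
        have h2 : (∑ i ∈ t, F i b) ≤ ∑ i ∈ t, F i (a + b) :=
          hHmono b (a + b) (Or.inr ⟨a, add_comm b a⟩)
        have h3 : F j (a + b) + (∑ i ∈ t, F i (a + b))
            ≤ ⨆ s₀ : S, (F j s₀ + ∑ i ∈ t, F i s₀) := le_ciSup hbddT (a + b)
        linarith
      have h4 : (⨆ s₀ : S, F j s₀) + (⨆ s₀ : S, ∑ i ∈ t, F i s₀)
          ≤ ⨆ s₀ : S, (F j s₀ + ∑ i ∈ t, F i s₀) := by
        have hA : ∀ a : S, F j a ≤ (⨆ s₀ : S, (F j s₀ + ∑ i ∈ t, F i s₀))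
            - (⨆ s₀ : S, ∑ i ∈ t, F i s₀) := by
          intro a
          have h1 : (⨆ s₀ : S, ∑ i ∈ t, F i s₀)
              ≤ (⨆ s₀ : S, (F j s₀ + ∑ i ∈ t, F i s₀)) - F j a :=
            ciSup_le fun b => by linarith [key a b]
          linarith
        have h2 := ciSup_le hA
        linarith
      have h5 : (∑ i ∈ t, ⨆ s₀ : S, F i s₀) ≤ ⨆ s₀ : S, ∑ i ∈ t, F i s₀ := ih
      calc (⨆ s₀ : S, F j s₀) + ∑ i ∈ t, ⨆ s₀ : S, F i s₀
          ≤ (⨆ s₀ : S, F j s₀) + ⨆ s₀ : S, ∑ i ∈ t, F i s₀ := by linarith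
        _ ≤ ⨆ s₀ : S, (F j s₀ + ∑ i ∈ t, F i s₀) := h4
        _ = ⨆ s₀ : S, ∑ i ∈ insert j t, F i s₀ := by
            congr 1
            funext s₀
            rw [Finset.sum_insert hj]
  -- conclude
  have hGbdd : BddAbove (Set.range G) := by
    refine ⟨1, ?_⟩
    rintro x ⟨s₀, rfl⟩
    haveI := hne s₀
    exact (ciInf_le (by
      refine ⟨-1, ?_⟩
      rintro x ⟨s, rfl⟩
      linarith [abs_le.mp (hbnd (⋂ j, A j) s.1)]) ⟨s₀, Or.inl rfl⟩).trans
      (le_of_abs_le (hbnd (⋂ j, A j) s₀))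
  have hfin : (⨆ s₀ : S, ∑ j, F j s₀) ≤ (⨆ s₀ : S, G s₀) + ((k : ℝ) - 1) := by
    apply ciSup_le
    intro s₀
    have := hstep s₀
    have h2 : G s₀ ≤ ⨆ s₀ : S, G s₀ := le_ciSup hGbdd s₀
    linarith
  have hmain := (hsum Finset.univ).trans hfin
  show (∑ j, ⨆ s₀ : S, F j s₀) - (k : ℝ) + 1 ≤ ⨆ s₀ : S, G s₀
  linarith
end

section
/- Let C be a weakly compact convex subset of a Banach space E, S a commutative semigroup, {T(t) : t ∈ S} a semigroup of nonexpansive mappings on C (T(s+t) = T(s)∘T(t)), X a suitable invariant subspace of B(S) containing all functions t ↦ f(T(t)x) for f ∈ E*, and μ an invariant mean on X. If z ∈ C satisfies T_μ z = z, then ‖T(s)z − z‖ ≤ limsup_{t ∈ S} ‖T(t)z − z‖ for every s ∈ S. -/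
/-!
Take a functional `f` of norm at most one with `f (T s z - z) = ‖T s z - z‖`. Since `T_μ z = z`,
the mean of `t ↦ f (T (s + t) z)` is `f z`, so `a t = f (T s z) - f (T (s + t) z)` has mean
`‖T s z - z‖`, while nonexpansiveness gives `a t ≤ ‖z - T t z‖`. Invariance of `μ` lets us
evaluate the mean on any tail `{s₀ + t}`, whence the bound by the limsup. That limsup is a genuine
supremum because the orbit of `z` is weakly bounded (its functionals lie in `B(S)`), hence bounded.
-/

open BoundedContinuousFunction
open Set

theorem exists_norm_le_of_forall_exists_norm_dual_le {𝕜 E ι : Type*} [RCLike 𝕜]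
    [NormedAddCommGroup E] [NormedSpace 𝕜 E] {v : ι → E}
    (h : ∀ f : StrongDual 𝕜 E, ∃ C, ∀ i, ‖f (v i)‖ ≤ C) : ∃ C, ∀ i, ‖v i‖ ≤ C := by
  obtain ⟨C, hC⟩ := banach_steinhaus (g := fun i ↦ NormedSpace.inclusionInDoubleDual 𝕜 E (v i)) h
  exact ⟨C, fun i ↦ (NormedSpace.inclusionInDoubleDualLi 𝕜).norm_map (v i) ▸ hC i⟩

section InvariantMean

variable {S : Type*} [TopologicalSpace S] {X : Subspace ℝ (S →ᵇ ℝ)}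
  (μ : X →L[ℝ] ℝ)

theorem mean_apply_one [Nonempty S] (h1 : (1 : S →ᵇ ℝ) ∈ X)
    (hμmean : ∀ a : X, (⨅ t, (a : S →ᵇ ℝ) t) ≤ μ a ∧ μ a ≤ ⨆ t, (a : S →ᵇ ℝ) t) :
    μ ⟨1, h1⟩ = 1 := by
  have h := hμmean ⟨1, h1⟩
  simp only [coe_one, Pi.one_apply, ciInf_const, ciSup_const] at h
  exact le_antisymm h.2 h.1

variable [DiscreteTopology S] [AddSemigroup S] (hXinv : ∀ a ∈ X, ∀ s : S, transBCF s a ∈ X)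

theorem invariantMean_le_iSup_add
    (hμle : ∀ a : X, μ a ≤ ⨆ t, (a : S →ᵇ ℝ) t)
    (hμinv : ∀ (a : X) (s : S), μ ⟨transBCF s a.1, hXinv a.1 a.2 s⟩ = μ a)
    (a : X) (s₀ : S) : μ a ≤ ⨆ t, (a : S →ᵇ ℝ) (s₀ + t) :=
  hμinv a s₀ ▸ hμle _

theorem invariantMean_const_sub_translate (h1 : (1 : S →ᵇ ℝ) ∈ X) (hμ1 : μ ⟨1, h1⟩ = 1)
    (hμinv : ∀ (a : X) (s : S), μ ⟨transBCF s a.1, hXinv a.1 a.2 s⟩ = μ a)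
    (r : ℝ) {a : S →ᵇ ℝ} (ha : a ∈ X) (s : S) :
    μ (r • ⟨1, h1⟩ - ⟨transBCF s a, hXinv a ha s⟩) = r - μ ⟨a, ha⟩ := by
  rw [map_sub μ, map_smul, hμ1, smul_eq_mul, mul_one]
  exact congrArg (r - ·) (hμinv ⟨a, ha⟩ s)

end InvariantMean

theorem ContinuousLinearMap.sub_le_norm_sub_of_norm_le_one {E : Type*} [SeminormedAddCommGroup E]
    [NormedSpace ℝ E] {f : StrongDual ℝ E} (hf : ‖f‖ ≤ 1) (x y : E) : f x - f y ≤ ‖x - y‖ := by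
  rw [← map_sub]
  exact (le_abs_self _).trans ((f.le_of_opNorm_le hf _).trans_eq (one_mul _))

theorem stmt7_general {S E : Type*} [AddCommSemigroup S] [TopologicalSpace S] [DiscreteTopology S]
    [NormedAddCommGroup E] [NormedSpace ℝ E]
    (C : Set E)
    (T : S → E → E)
    (hmaps : ∀ t, Set.MapsTo (T t) C C)
    (hne : ∀ t, ∀ x ∈ C, ∀ y ∈ C, ‖T t x - T t y‖ ≤ ‖x - y‖)
    (hsg : ∀ s t : S, ∀ x ∈ C, T (s + t) x = T s (T t x))
    (X : Subspace ℝ (S →ᵇ ℝ)) (hX1 : (1 : S →ᵇ ℝ) ∈ X)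
    (hXinv : ∀ a ∈ X, ∀ s : S, transBCF s a ∈ X)
    (hXorb : ∀ x ∈ C, ∀ f : E →L[ℝ] ℝ, ∃ a ∈ X, ∀ t : S, a t = f (T t x))
    (μ : ↥X →L[ℝ] ℝ)
    (hμmean : ∀ a : ↥X, (⨅ t : S, (a : S →ᵇ ℝ) t) ≤ μ a ∧ μ a ≤ ⨆ t : S, (a : S →ᵇ ℝ) t)
    (hμinv : ∀ (a : ↥X) (s : S), μ ⟨transBCF s a.1, hXinv a.1 a.2 s⟩ = μ a)
    (z : E) (hzC : z ∈ C)
    (hfix : ∀ (f : E →L[ℝ] ℝ) (a : S →ᵇ ℝ) (ha : a ∈ X),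
      (∀ t : S, a t = f (T t z)) → μ ⟨a, ha⟩ = f z)
    (s : S) :
    ‖T s z - z‖ ≤ ⨅ s₀ : S, ⨆ t : {t : S // s₀ = t ∨ ∃ u, s₀ + u = t}, ‖T t.1 z - z‖ := by
  have : Nonempty S := ⟨s⟩
  obtain ⟨M, hM⟩ : ∃ M, ∀ t, ‖T t z‖ ≤ M :=
    exists_norm_le_of_forall_exists_norm_dual_le fun f ↦
      let ⟨a, _, ha⟩ := hXorb z hzC f
      ⟨‖a‖, fun t ↦ ha t ▸ a.norm_coe_le_norm t⟩
  obtain ⟨f, hf1, hfz⟩ := exists_dual_vector'' ℝ (T s z - z)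
  obtain ⟨b, hbX, hb⟩ := hXorb z hzC f
  set a : X := f (T s z) • ⟨1, hX1⟩ - ⟨transBCF s b, hXinv b hbX s⟩ with ha_def
  have hμa : μ a = ‖T s z - z‖ := by
    rw [ha_def, invariantMean_const_sub_translate μ hXinv hX1 (mean_apply_one μ hX1 hμmean)
      hμinv _ hbX, hfix f b hbX hb, ← map_sub]
    exact hfz
  have ha : ∀ t, (a : S →ᵇ ℝ) t ≤ ‖T t z - z‖ := fun t ↦ calc
    (a : S →ᵇ ℝ) t = f (T s z) - f (T s (T t z)) := by
      simp [a, transBCF, hb, hsg s t z hzC]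
    _ ≤ ‖T s z - T s (T t z)‖ := f.sub_le_norm_sub_of_norm_le_one hf1 _ _
    _ ≤ ‖T t z - z‖ := (hne s z hzC _ (hmaps t hzC)).trans_eq (norm_sub_rev _ _)
  refine le_ciInf fun s₀ ↦ ?_
  have hbdd : BddAbove (range fun t : {t : S // s₀ = t ∨ ∃ u, s₀ + u = t} ↦ ‖T t.1 z - z‖) :=
    ⟨M + ‖z‖, forall_mem_range.2 fun t ↦ (norm_sub_le _ _).trans (by gcongr; exact hM _)⟩
  calc ‖T s z - z‖ = μ a := hμa.symm
    _ ≤ ⨆ t, (a : S →ᵇ ℝ) (s₀ + t) :=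
      invariantMean_le_iSup_add μ hXinv (fun a ↦ (hμmean a).2) hμinv a s₀
    _ ≤ _ := ciSup_le fun t ↦ (ha _).trans (le_ciSup hbdd ⟨s₀ + t, .inr ⟨t, rfl⟩⟩)

/-- Let `C` be a weakly compact convex subset of a Banach space `E`,
`{T(t) : t ∈ S}` a commutative semigroup of nonexpansive mappings on `C`,
`X` a translation-invariant subspace of `B(S)` containing the constants and all
orbit functions `t ↦ f(T(t)x)`, and `μ` an invariant mean on `X`
(a mean: `inf_t a(t) ≤ μ(a) ≤ sup_t a(t)` for all `a ∈ X`).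
If `z ∈ C` satisfies `T_μ z = z` (i.e. `μ_t(f(T(t)z)) = f(z)` for all `f ∈ E*`),
then `‖T(s)z - z‖ ≤ limsup_{t ∈ S} ‖T(t)z - z‖` for every `s ∈ S`, the limsup
over the directed set `S` being `⨅ s₀, ⨆ t ≥ s₀`. -/
theorem stmt7 {S E : Type*} [AddCommSemigroup S] [TopologicalSpace S] [DiscreteTopology S]
    [NormedAddCommGroup E] [NormedSpace ℝ E] [CompleteSpace E]
    (C : Set E) (hconv : Convex ℝ C)
    (hwcpt : IsCompact ((toWeakSpace ℝ E) '' C))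
    (T : S → E → E)
    (hmaps : ∀ t, Set.MapsTo (T t) C C)
    (hne : ∀ t, ∀ x ∈ C, ∀ y ∈ C, ‖T t x - T t y‖ ≤ ‖x - y‖)
    (hsg : ∀ s t : S, ∀ x ∈ C, T (s + t) x = T s (T t x))
    (X : Subspace ℝ (S →ᵇ ℝ)) (hX1 : (1 : S →ᵇ ℝ) ∈ X)
    (hXinv : ∀ a ∈ X, ∀ s : S, transBCF s a ∈ X)
    (hXorb : ∀ x ∈ C, ∀ f : E →L[ℝ] ℝ, ∃ a ∈ X, ∀ t : S, a t = f (T t x))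
    (μ : ↥X →L[ℝ] ℝ)
    (hμmean : ∀ a : ↥X, (⨅ t : S, (a : S →ᵇ ℝ) t) ≤ μ a ∧ μ a ≤ ⨆ t : S, (a : S →ᵇ ℝ) t)
    (hμinv : ∀ (a : ↥X) (s : S), μ ⟨transBCF s a.1, hXinv a.1 a.2 s⟩ = μ a)
    (z : E) (hzC : z ∈ C)
    (hfix : ∀ (f : E →L[ℝ] ℝ) (a : S →ᵇ ℝ) (ha : a ∈ X),
      (∀ t : S, a t = f (T t z)) → μ ⟨a, ha⟩ = f z)
    (s : S) :
    ‖T s z - z‖ ≤ ⨅ s₀ : S, ⨆ t : {t : S // s₀ = t ∨ ∃ u, s₀ + u = t}, ‖T t.1 z - z‖ :=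
  stmt7_general C T hmaps hne hsg X hX1 hXinv hXorb μ hμmean hμinv z hzC hfix s
end

section
/- Let {z_n} and {w_n} be bounded sequences in a Banach space E and {α_n} ⊆ [0,1] with 0 < liminf α_n ≤ limsup α_n < 1. Suppose z_{n+1} = α_n w_n + (1 − α_n) z_n for all n, and for every k ∈ ℕ, limsup_n (‖w_n − w_{n+k}‖ − ‖z_n − z_{n+k}‖) ≤ 0. Then liminf_n ‖w_n − z_n‖ = 0. -/
open Filter

set_option maxHeartbeats 1000000 in
/-- Krasnoselskii–Mann type lemma: if `{z_n}`, `{w_n}` are bounded sequences in a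
Banach space, `α_n ∈ [0,1]` with `0 < liminf α_n ≤ limsup α_n < 1`,
`z_{n+1} = α_n w_n + (1 - α_n) z_n`, and for every `k`
`limsup_n (‖w_n - w_{n+k}‖ - ‖z_n - z_{n+k}‖) ≤ 0`, then
`liminf_n ‖w_n - z_n‖ = 0`. -/
theorem stmt9 {E : Type*} [NormedAddCommGroup E] [NormedSpace ℝ E] [CompleteSpace E]
    (z w : ℕ → E)
    (hz : Bornology.IsBounded (Set.range z)) (hw : Bornology.IsBounded (Set.range w))
    (α : ℕ → ℝ) (hα : ∀ n, α n ∈ Set.Icc (0 : ℝ) 1)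
    (h₁ : 0 < liminf α atTop) (h₂ : limsup α atTop < 1)
    (hrec : ∀ n, z (n + 1) = α n • w n + (1 - α n) • z n)
    (hcond : ∀ k : ℕ,
      limsup (fun n => ‖w n - w (n + k)‖ - ‖z n - z (n + k)‖) atTop ≤ 0) :
    liminf (fun n => ‖w n - z n‖) atTop = 0 := by
  obtain ⟨Cw, hCw⟩ := isBounded_iff_forall_norm_le.mp hw
  obtain ⟨Cz, hCz⟩ := isBounded_iff_forall_norm_le.mp hz
  have hCw' : ∀ n, ‖w n‖ ≤ Cw := fun n => hCw _ ⟨n, rfl⟩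
  have hCz' : ∀ n, ‖z n‖ ≤ Cz := fun n => hCz _ ⟨n, rfl⟩
  set M : ℝ := Cw + Cz with hMdef
  have hM : ∀ p q, ‖w p - z q‖ ≤ M := fun p q =>
    (norm_sub_le _ _).trans (add_le_add (hCw' p) (hCz' q))
  have hM0 : 0 ≤ M := le_trans (norm_nonneg _) (hM 0 0)
  have hsbdd : IsBoundedUnder (· ≤ ·) atTop (fun n => ‖w n - z n‖) :=
    isBoundedUnder_of ⟨M, fun n => hM n n⟩
  have hsbdd' : IsBoundedUnder (· ≥ ·) atTop (fun n => ‖w n - z n‖) :=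
    isBoundedUnder_of ⟨0, fun n => norm_nonneg _⟩
  set c : ℝ := liminf (fun n => ‖w n - z n‖) atTop with hcdef
  have hc0 : 0 ≤ c :=
    le_liminf_of_le hsbdd.isCoboundedUnder_ge
      (Eventually.of_forall fun n => norm_nonneg _)
  by_contra hne
  have hc : 0 < c := lt_of_le_of_ne hc0 (Ne.symm hne)
  -- the eventual bounds on α
  set a : ℝ := liminf α atTop / 2 with hadef
  have ha : 0 < a := by positivity
  have hae : ∀ᶠ n in atTop, a < α n :=
    eventually_lt_of_lt_liminf (by rw [hadef]; linarith)
      (isBoundedUnder_of ⟨0, fun n => (hα n).1⟩)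
  set b : ℝ := (limsup α atTop + 1) / 2 with hbdef
  have hlimsup0 : 0 ≤ limsup α atTop :=
    le_limsup_of_frequently_le (Frequently.of_forall fun n => (hα n).1)
      (isBoundedUnder_of ⟨1, fun n => (hα n).2⟩)
  have hb1 : b < 1 := by rw [hbdef]; linarith
  have hb0 : 0 ≤ b := by rw [hbdef]; linarith
  have h1b : 0 < 1 - b := by linarith
  have hbe : ∀ᶠ n in atTop, α n < b :=
    eventually_lt_of_limsup_lt (by rw [hbdef]; linarith)
      (isBoundedUnder_of ⟨1, fun n => (hα n).2⟩)
  -- choose m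
  obtain ⟨m, hm⟩ := exists_nat_gt (M / (a * c))
  have hmac : M < (1 + m * a) * c := by
    have h' := (div_lt_iff₀ (by positivity : (0:ℝ) < a * c)).mp hm
    nlinarith
  have hm1 : 1 ≤ m := by
    by_contra h'
    have hm0 : m = 0 := by omega
    have : M / (a * c) < 0 := by rw [hm0] at hm; exact_mod_cast hm
    have : (0:ℝ) ≤ M / (a*c) := by positivity
    linarith
  -- constants for the error terms
  set C : ℝ := ((m:ℝ) + 1)^2 + 1 with hCdef
  have hC0 : 0 < C := by positivity
  set d : ℝ := (1 - b)⁻¹ with hddef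
  have hd0 : 0 < d := by positivity
  have hd1 : 1 ≤ d := by
    rw [hddef]
    rw [le_inv_comm₀ one_pos h1b]
    linarith
  set e : ℕ → ℝ := fun r => d ^ r * (1 + C * r) with hedef
  have he0 : ∀ r, 0 < e r := by
    intro r
    have : (0:ℝ) ≤ (r:ℝ) := Nat.cast_nonneg r
    rw [hedef]
    positivity
  have he00 : e 0 = 1 := by rw [hedef]; simp
  have heR : ∀ r : ℕ, e r + C ≤ (1 - b) * e (r+1) := by
    intro r
    have hdb : (1 - b) * d = 1 := mul_inv_cancel₀ (ne_of_gt h1b)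
    have hstep : (1 - b) * e (r+1) = d ^ r * (1 + C * ((r:ℝ)+1)) := by
      simp only [hedef]
      rw [pow_succ]
      push_cast
      linear_combination d ^ r * (1 + C * ((r:ℝ) + 1)) * hdb
    have hdr : (1:ℝ) ≤ d ^ r := one_le_pow₀ hd1
    rw [hstep]
    simp only [hedef]
    nlinarith [hdr, hC0]
  clear_value M c a b C d e
  -- key estimate
  have key : ∀ η : ℝ, 0 < η → (1 + m * a) * c ≤ M + e m * η := by
    intro η hη
    have hη0 : 0 ≤ η := le_of_lt hη
    -- eventual smallness of the slack, for all k ≤ m simultaneously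
    have hev4 : ∀ᶠ n in atTop, ∀ k ∈ Finset.Icc 1 m,
        ‖w n - w (n + k)‖ - ‖z n - z (n + k)‖ < η := by
      rw [eventually_all_finset]
      intro k _
      refine eventually_lt_of_limsup_lt (lt_of_le_of_lt (hcond k) hη) ?_
      refine isBoundedUnder_of ⟨Cw + Cw, fun n => ?_⟩
      have h1 := norm_sub_le (w n) (w (n + k))
      have h2 : (0:ℝ) ≤ ‖z n - z (n + k)‖ := norm_nonneg _
      have := hCw' n; have := hCw' (n + k)
      linarith
    have hev3 : ∀ᶠ n in atTop, c - η < ‖w n - z n‖ :=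
      eventually_lt_of_lt_liminf (by rw [← hcdef]; linarith) hsbdd'
    obtain ⟨N, hN⟩ := eventually_atTop.mp (hae.and (hbe.and (hev3.and hev4)))
    -- choose the base index i
    obtain ⟨i, hsi, hiN⟩ :=
      ((frequently_lt_of_liminf_lt hsbdd.isCoboundedUnder_ge
        (show liminf (fun n => ‖w n - z n‖) atTop < c + η by rw [← hcdef]; linarith)).and_eventually
        (eventually_ge_atTop N)).exists
    have hwa : ∀ j, i ≤ j → a < α j := fun j hj => (hN j (le_trans hiN hj)).1
    have hwb : ∀ j, i ≤ j → α j < b := fun j hj => (hN j (le_trans hiN hj)).2.1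
    have hws : ∀ j, i ≤ j → c - η < ‖w j - z j‖ := fun j hj => (hN j (le_trans hiN hj)).2.2.1
    have hwc : ∀ j k, i ≤ j → 1 ≤ k → k ≤ m →
        ‖w j - w (j + k)‖ ≤ ‖z j - z (j + k)‖ + η := by
      intro j k hj hk1 hkm
      have := (hN j (le_trans hiN hj)).2.2.2 k (Finset.mem_Icc.mpr ⟨hk1, hkm⟩)
      linarith
    -- basic norm identities
    have hz1 : ∀ p, ‖z (p+1) - z p‖ = α p * ‖w p - z p‖ := by
      intro p
      have hid : z (p+1) - z p = α p • (w p - z p) := by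
        rw [hrec p]; module
      rw [hid, norm_smul, Real.norm_eq_abs, abs_of_nonneg (hα p).1]
    have hz2 : ∀ p, ‖w p - z (p+1)‖ = (1 - α p) * ‖w p - z p‖ := by
      intro p
      have hid : w p - z (p+1) = (1 - α p) • (w p - z p) := by
        rw [hrec p]; module
      rw [hid, norm_smul, Real.norm_eq_abs, abs_of_nonneg (by linarith [(hα p).2])]
    -- the chain bound on ‖w j - z j‖ in the window
    have sbound : ∀ t, t ≤ m → ‖w (i+t) - z (i+t)‖ ≤ c + ((t:ℝ)+1) * η := by
      intro t
      induction t with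
      | zero =>
        intro _
        simp only [Nat.add_zero, Nat.cast_zero]
        linarith [hsi]
      | succ t ih =>
        intro ht
        have ih' := ih (by omega)
        have e1 := hz1 (i+t)
        have e2 := hz2 (i+t)
        have e3 : ‖w (i+t) - w (i+t+1)‖ ≤ ‖z (i+t) - z (i+t+1)‖ + η := by
          have := hwc (i+t) 1 (by omega) le_rfl hm1
          simpa using this
        have e3' : ‖w (i+t+1) - w (i+t)‖ ≤ ‖z (i+t+1) - z (i+t)‖ + η := by
          rw [norm_sub_rev (w (i+t+1)), norm_sub_rev (z (i+t+1))]; exact e3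
        have tri : ‖w (i+t+1) - z (i+t+1)‖ ≤ ‖w (i+t+1) - w (i+t)‖ + ‖w (i+t) - z (i+t+1)‖ :=
          norm_sub_le_norm_sub_add_norm_sub _ _ _
        have hs0 : (0:ℝ) ≤ ‖w (i+t) - z (i+t)‖ := norm_nonneg _
        have hα1 := (hα (i+t)).1
        have hα2 := (hα (i+t)).2
        have : ‖w (i+t+1) - z (i+t+1)‖ ≤ ‖w (i+t) - z (i+t)‖ + η := by nlinarith
        push_cast
        have harith : i + (t+1) = i + t + 1 := by omega
        rw [harith]
        linarith
    -- the telescoping bound on z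
    have zbound : ∀ r, r ≤ m → ‖z (i+(m-r)) - z (i+m)‖ ≤
        (∑ j ∈ Finset.Ico (i+(m-r)) (i+m), α j) * (c + ((m:ℝ)+1) * η) := by
      intro r
      induction r with
      | zero =>
        intro _
        simp
      | succ r ih =>
        intro hr
        have hr' : r ≤ m := by omega
        have hn1 : i + (m - (r+1)) + 1 = i + (m - r) := by omega
        have hlt : i + (m - (r+1)) < i + m := by omega
        set n := i + (m - (r+1)) with hn
        have hlt' : n < i + m := hlt
        have hsum : ∑ j ∈ Finset.Ico n (i+m), α j
            = α n + ∑ j ∈ Finset.Ico (n+1) (i+m), α j :=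
          Finset.sum_eq_sum_Ico_succ_bot hlt _
        have ihr := ih hr'
        rw [← hn1] at ihr
        have e1 : ‖z n - z (n+1)‖ = α n * ‖w n - z n‖ := by
          rw [norm_sub_rev]; exact hz1 n
        have hsn : ‖w n - z n‖ ≤ c + ((m:ℝ)+1) * η := by
          have h1 := sbound (m - (r+1)) (by omega)
          have h2 : ((m - (r+1) : ℕ):ℝ) + 1 ≤ (m:ℝ) + 1 := by
            have : (m - (r+1) : ℕ) ≤ m := by omega
            have h3 : ((m - (r+1) : ℕ):ℝ) ≤ (m:ℝ) := Nat.cast_le.mpr this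
            linarith
          rw [← hn] at h1
          nlinarith
        have hK0 : (0:ℝ) ≤ c + ((m:ℝ)+1) * η := by positivity
        calc ‖z n - z (i+m)‖ ≤ ‖z n - z (n+1)‖ + ‖z (n+1) - z (i+m)‖ :=
              norm_sub_le_norm_sub_add_norm_sub _ _ _
          _ ≤ α n * (c + ((m:ℝ)+1) * η)
              + (∑ j ∈ Finset.Ico (n+1) (i+m), α j) * (c + ((m:ℝ)+1) * η) := by
              refine add_le_add ?_ ihr
              rw [e1]
              exact mul_le_mul_of_nonneg_left hsn (hα n).1
          _ = (∑ j ∈ Finset.Ico n (i+m), α j) * (c + ((m:ℝ)+1) * η) := by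
              rw [hsum]; ring
    -- the main Goebel–Kirk type induction
    have main : ∀ r, r ≤ m →
        (1 + ∑ j ∈ Finset.Ico (i+(m-r)) (i+m), α j) * c ≤
          ‖w (i+m) - z (i+(m-r))‖ + e r * η := by
      intro r
      induction r with
      | zero =>
        intro _
        have h1 := hws (i+m) (by omega)
        simp only [Nat.sub_zero, Finset.Ico_self, Finset.sum_empty, he00]
        linarith
      | succ r ih =>
        intro hr
        have hr' : r ≤ m := by omega
        have hn1 : i + (m - (r+1)) + 1 = i + (m - r) := by omega
        have hlt : i + (m - (r+1)) < i + m := by omega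
        set n := i + (m - (r+1)) with hn
        have hni : i ≤ n := by omega
        have hnk : n + (r+1) = i + m := by omega
        clear_value n
        have hA0 : (0:ℝ) ≤ α n := (hα n).1
        have hA1 : α n ≤ 1 := (hα n).2
        have hAb : α n < b := hwb n hni
        have h1A : 0 < 1 - α n := by linarith
        have hsum : ∑ j ∈ Finset.Ico n (i+m), α j
            = α n + ∑ j ∈ Finset.Ico (n+1) (i+m), α j :=
          Finset.sum_eq_sum_Ico_succ_bot hlt _
        set T : ℝ := ∑ j ∈ Finset.Ico (n+1) (i+m), α j with hTdef
        have hT0 : 0 ≤ T := Finset.sum_nonneg fun j _ => (hα j).1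
        have hTm : T ≤ (m:ℝ) := by
          have h1 := Finset.sum_le_card_nsmul (Finset.Ico (n+1) (i+m)) α 1
            (fun j _ => (hα j).2)
          have hcard : (Finset.Ico (n+1) (i+m)).card = r := by
            rw [Nat.card_Ico]; omega
          rw [hcard, nsmul_eq_mul, mul_one] at h1
          have : (r:ℝ) ≤ (m:ℝ) := Nat.cast_le.mpr hr'
          rw [← hTdef] at h1
          linarith
        have ihr := ih hr'
        rw [← hn1] at ihr
        rw [← hTdef] at ihr
        clear_value T
        -- the basic identity and the resulting norm inequality
        have hid : w (i+m) - z (n+1) =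
            (1 - α n) • (w (i+m) - z n) - α n • (w n - w (i+m)) := by
          rw [hrec n]; module
        have hXr : ‖w (i+m) - z (n+1)‖ ≤
            (1 - α n) * ‖w (i+m) - z n‖ + α n * ‖w n - w (i+m)‖ := by
          calc ‖w (i+m) - z (n+1)‖
              ≤ ‖(1 - α n) • (w (i+m) - z n)‖ + ‖α n • (w n - w (i+m))‖ := by
                rw [hid]; exact norm_sub_le _ _
            _ = (1 - α n) * ‖w (i+m) - z n‖ + α n * ‖w n - w (i+m)‖ := by
                rw [norm_smul, norm_smul, Real.norm_eq_abs, Real.norm_eq_abs,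
                  abs_of_nonneg hA0, abs_of_nonneg (le_of_lt h1A)]
        -- bound on W
        have hW : ‖w n - w (i+m)‖ ≤
            (α n + T) * (c + ((m:ℝ)+1) * η) + η := by
          have h1 := hwc n (r+1) hni (by omega) hr
          rw [hnk] at h1
          have h2 := zbound (r+1) hr
          rw [← hn] at h2
          rw [hsum] at h2
          linarith
        have hW0 : (0:ℝ) ≤ ‖w n - w (i+m)‖ := norm_nonneg _
        -- error-term recursion
        have hee : e r + C ≤ (1 - α n) * e (r+1) := by
          have h1 := heR r
          have h2 : (1 - b) * e (r+1) ≤ (1 - α n) * e (r+1) := by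
            have := he0 (r+1)
            nlinarith
          linarith
        -- assemble
        have her0 := he0 r
        have her1 := he0 (r+1)
        have step1 : (1 + T) * c ≤ (1 - α n) * ‖w (i+m) - z n‖
            + α n * ((α n + T) * (c + ((m:ℝ)+1) * η) + η) + e r * η := by
          have h1 : α n * ‖w n - w (i+m)‖ ≤
              α n * ((α n + T) * (c + ((m:ℝ)+1) * η) + η) :=
            mul_le_mul_of_nonneg_left hW hA0
          linarith [ihr, hXr]
        have hCb : α n * ((α n + T) * ((m:ℝ)+1)) + α n ≤ C := by
          rw [hCdef]
          have hAT : α n * (α n + T) ≤ (m:ℝ) + 1 := by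
            nlinarith [mul_le_mul_of_nonneg_right hA1 (by linarith : (0:ℝ) ≤ α n + T)]
          have hm0' : (0:ℝ) ≤ (m:ℝ) + 1 := by positivity
          nlinarith [mul_le_mul_of_nonneg_right hAT hm0']
        have h4 : (α n * ((α n + T) * ((m:ℝ)+1)) + α n) * η ≤ C * η :=
          mul_le_mul_of_nonneg_right hCb hη0
        have step2 : (1 - α n) * ((1 + α n + T) * c) ≤
            (1 - α n) * ‖w (i+m) - z n‖ + (e r + C) * η := by
          nlinarith [step1, h4, hc0, hA0]
        have h5 : (e r + C) * η ≤ ((1 - α n) * e (r+1)) * η :=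
          mul_le_mul_of_nonneg_right hee hη0
        have step3 : (1 - α n) * ((1 + α n + T) * c) ≤
            (1 - α n) * (‖w (i+m) - z n‖ + e (r+1) * η) := by
          linarith [step2, h5]
        have step4 : (1 + α n + T) * c ≤ ‖w (i+m) - z n‖ + e (r+1) * η :=
          le_of_mul_le_mul_left (by linarith [step3]) h1A
        rw [hsum]
        linarith [step4]
    -- conclude from the main estimate at r = m
    have hfin := main m le_rfl
    have hsimp : i + (m - m) = i := by omega
    rw [hsimp] at hfin
    have hTa : (m:ℝ) * a ≤ ∑ j ∈ Finset.Ico i (i+m), α j := by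
      have h1 : ∀ j ∈ Finset.Ico i (i+m), a ≤ α j := by
        intro j hj
        exact le_of_lt (hwa j (Finset.mem_Ico.mp hj).1)
      have h2 := Finset.card_nsmul_le_sum (Finset.Ico i (i+m)) α a h1
      have hcard : (Finset.Ico i (i+m)).card = m := by rw [Nat.card_Ico]; omega
      rw [hcard, nsmul_eq_mul] at h2
      exact h2
    have hXM : ‖w (i+m) - z i‖ ≤ M := hM (i+m) i
    have hmono : (1 + (m:ℝ) * a) * c ≤ (1 + ∑ j ∈ Finset.Ico i (i+m), α j) * c := by
      exact mul_le_mul_of_nonneg_right (by linarith) hc0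
    calc (1 + (m:ℝ) * a) * c ≤ (1 + ∑ j ∈ Finset.Ico i (i+m), α j) * c := hmono
      _ ≤ ‖w (i+m) - z i‖ + e m * η := hfin
      _ ≤ M + e m * η := by linarith
  -- derive the contradiction
  have hfinal : (1 + m * a) * c ≤ M := by
    by_contra h'
    push_neg at h'
    have hem := he0 m
    have hηpos : 0 < ((1 + m * a) * c - M) / (2 * e m) :=
      div_pos (by linarith) (by positivity)
    have hkey := key _ hηpos
    have hcalc : e m * (((1 + m * a) * c - M) / (2 * e m)) = ((1 + m * a) * c - M) / 2 := by
      field_simp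
    rw [hcalc] at hkey
    linarith
  linarith
end

section
/- Let {z_n} and {w_n} be bounded sequences in a Banach space E and {α_n} ⊆ [0,1] with 0 < liminf α_n ≤ limsup α_n < 1. Suppose z_{n+1} = α_n w_n + (1 − α_n) z_n for all n and limsup_n (‖w_{n+1} − w_n‖ − ‖z_{n+1} − z_n‖) ≤ 0. Then lim_n ‖w_n − z_n‖ = 0. -/
open Filter Finset

/-- Pure arithmetic core of the induction step in Suzuki's lemma. -/
lemma suzuki_arith {A d δ bm S' T Gj Gj1 W1 W2 Wd K : ℝ}
    (h1 : W2 - A * Wd ≤ (1 - A) * W1)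
    (h2 : (1 + S') * bm - δ * Gj ≤ W2)
    (h3 : Wd ≤ T)
    (h4 : -(3 * ((K + 1) * δ)) ≤ (A + S') * bm - T)
    (hG : Gj1 = (Gj + d * (3 * (K + 1))) / (1 - d))
    (hA0 : 0 ≤ A) (hAd : A ≤ d) (hd1 : d < 1) (hδ : 0 ≤ δ)
    (hGj1 : 0 ≤ Gj1) (hK : 0 ≤ K) :
    (1 + (A + S')) * bm - δ * Gj1 ≤ W1 := by
  have hq : 0 < 1 - A := by linarith
  have hd0 : 0 ≤ d := le_trans hA0 hAd
  have hP3 : A * Wd ≤ A * T := mul_le_mul_of_nonneg_left h3 hA0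
  have hchain : (1 + S') * bm - δ * Gj - A * T ≤ (1 - A) * W1 := by linarith
  have hP1 : A * (-(3 * ((K + 1) * δ))) ≤ A * ((A + S') * bm - T) :=
    mul_le_mul_of_nonneg_left h4 hA0
  have hP1' : -(d * (3 * ((K + 1) * δ))) ≤ A * ((A + S') * bm - T) := by
    nlinarith [mul_nonneg (by linarith : (0:ℝ) ≤ K + 1) hδ]
  have hP2 : (1 - d) * Gj1 ≤ (1 - A) * Gj1 :=
    mul_le_mul_of_nonneg_right (by linarith) hGj1
  have hP2' : Gj + d * (3 * (K + 1)) ≤ (1 - A) * Gj1 := by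
    rw [hG] at hP2 ⊢
    calc Gj + d * (3 * (K + 1)) = (1 - d) * ((Gj + d * (3 * (K + 1))) / (1 - d)) := by
          rw [mul_div_cancel₀]
          · linarith
      _ ≤ _ := hP2
  have hmul : (1 - A) * ((1 + (A + S')) * bm - δ * Gj1) ≤ (1 - A) * W1 := by
    have hδG : δ * (Gj + d * (3 * (K + 1))) ≤ (1 - A) * (δ * Gj1) := by
      have := mul_le_mul_of_nonneg_left hP2' hδ
      nlinarith []
    nlinarith [hchain, hP1', hδG, mul_nonneg (mul_nonneg hd0 hδ) (by linarith : (0:ℝ) ≤ K + 1)]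
  exact le_of_mul_le_mul_left hmul hq

set_option maxHeartbeats 1000000 in
/-- Strengthened Krasnoselskii–Mann type lemma: if `{z_n}`, `{w_n}` are bounded
sequences in a Banach space, `α_n ∈ [0,1]` with `0 < liminf α_n ≤ limsup α_n < 1`,
`z_{n+1} = α_n w_n + (1 - α_n) z_n`, and
`limsup_n (‖w_{n+1} - w_n‖ - ‖z_{n+1} - z_n‖) ≤ 0`, then `lim_n ‖w_n - z_n‖ = 0`. -/
theorem stmt10 {E : Type*} [NormedAddCommGroup E] [NormedSpace ℝ E] [CompleteSpace E]
    (z w : ℕ → E)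
    (hz : Bornology.IsBounded (Set.range z)) (hw : Bornology.IsBounded (Set.range w))
    (α : ℕ → ℝ) (hα : ∀ n, α n ∈ Set.Icc (0 : ℝ) 1)
    (h₁ : 0 < liminf α atTop) (h₂ : limsup α atTop < 1)
    (hrec : ∀ n, z (n + 1) = α n • w n + (1 - α n) • z n)
    (hcond : limsup (fun n => ‖w (n + 1) - w n‖ - ‖z (n + 1) - z n‖) atTop ≤ 0) :
    Tendsto (fun n => ‖w n - z n‖) atTop (nhds 0) := by
  classical
  obtain ⟨Rz, hRz⟩ := hz.subset_closedBall 0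
  obtain ⟨Rw, hRw⟩ := hw.subset_closedBall 0
  have hzbd : ∀ n, ‖z n‖ ≤ Rz := by
    intro n
    simpa [Metric.mem_closedBall, dist_eq_norm] using hRz ⟨n, rfl⟩
  have hwbd : ∀ n, ‖w n‖ ≤ Rw := by
    intro n
    simpa [Metric.mem_closedBall, dist_eq_norm] using hRw ⟨n, rfl⟩
  set M := Rw + Rz with hMdef
  have hM : ∀ m n, ‖w m - z n‖ ≤ M := fun m n =>
    (norm_sub_le _ _).trans (add_le_add (hwbd m) (hzbd n))
  set b : ℕ → ℝ := fun n => ‖w n - z n‖ with hbdef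
  have hb0 : ∀ n, 0 ≤ b n := fun n => norm_nonneg _
  have hbM : ∀ n, b n ≤ M := fun n => hM n n
  set ε : ℕ → ℝ := fun n => ‖w (n + 1) - w n‖ - α n * b n with hεdef
  have hwstep : ∀ n, ‖w (n + 1) - w n‖ = α n * b n + ε n := fun n => by
    simp [hεdef]
  have hznorm : ∀ n, ‖z (n + 1) - z n‖ = α n * b n := by
    intro n
    have h : z (n + 1) - z n = α n • (w n - z n) := by rw [hrec n]; module
    rw [h, norm_smul, Real.norm_eq_abs, abs_of_nonneg (hα n).1]
  have hεlimsup : limsup ε atTop ≤ 0 := by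
    have h : ε = fun n => ‖w (n + 1) - w n‖ - ‖z (n + 1) - z n‖ := by
      funext n; rw [hεdef]; rw [hznorm n]
    rw [h]; exact hcond
  -- step inequality for b
  have hbstep : ∀ n, b (n + 1) ≤ b n + ε n := by
    intro n
    have h : w n - z (n + 1) = (1 - α n) • (w n - z n) := by rw [hrec n]; module
    have h2 : ‖w n - z (n + 1)‖ = (1 - α n) * b n := by
      rw [h, norm_smul, Real.norm_eq_abs, abs_of_nonneg (by linarith [(hα n).2])]
    have h3 : b (n + 1) ≤ ‖w (n + 1) - w n‖ + ‖w n - z (n + 1)‖ := by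
      simpa [hbdef] using norm_sub_le_norm_sub_add_norm_sub (w (n+1)) (w n) (z (n+1))
    rw [hwstep n, h2] at h3
    linarith
  -- boundedness facts for limsup API
  have hαbd : IsBoundedUnder (· ≤ ·) atTop α := isBoundedUnder_of ⟨1, fun n => (hα n).2⟩
  have hαbd' : IsBoundedUnder (· ≥ ·) atTop α := isBoundedUnder_of ⟨0, fun n => (hα n).1⟩
  have hεbd : IsBoundedUnder (· ≤ ·) atTop ε := by
    refine isBoundedUnder_of ⟨Rw + Rw, fun n => ?_⟩
    have h1 : ‖w (n + 1) - w n‖ ≤ Rw + Rw :=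
      (norm_sub_le _ _).trans (add_le_add (hwbd _) (hwbd _))
    have h2 : 0 ≤ α n * b n := mul_nonneg (hα n).1 (hb0 n)
    simp only [hεdef]; linarith
  have hbbd : IsBoundedUnder (· ≤ ·) atTop b := isBoundedUnder_of ⟨M, hbM⟩
  have hbbd' : IsBoundedUnder (· ≥ ·) atTop b := isBoundedUnder_of ⟨0, hb0⟩
  -- MAIN CLAIM
  have hmain : limsup b atTop ≤ 0 := by
    by_contra hcon
    push_neg at hcon
    set r := limsup b atTop with hrdef
    set a := liminf α atTop / 2 with hadef
    have ha0 : 0 < a := by positivity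
    have halt : a < liminf α atTop := by
      simp only [hadef]; linarith
    set d := (limsup α atTop + 1) / 2 with hddef
    have hαll : liminf α atTop ≤ limsup α atTop := liminf_le_limsup hαbd hαbd'
    have hd1 : d < 1 := by simp only [hddef]; linarith
    have hd0 : 0 < d := by simp only [hddef]; linarith
    have hdgt : limsup α atTop < d := by simp only [hddef]; linarith
    -- the correction sequence G
    obtain ⟨G, hG0, hGs⟩ : ∃ G : ℕ → ℝ, G 0 = 0 ∧
        ∀ j : ℕ, G (j + 1) = (G j + d * (3 * ((j : ℝ) + 1))) / (1 - d) :=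
      ⟨fun j => Nat.rec (0 : ℝ) (fun i Gi => (Gi + d * (3 * ((i : ℝ) + 1))) / (1 - d)) j,
        rfl, fun j => rfl⟩
    have hGnn : ∀ j, 0 ≤ G j := by
      intro j
      induction j with
      | zero => simp [hG0]
      | succ j ih =>
        rw [hGs j]
        apply div_nonneg
        · positivity
        · linarith
    -- choose k
    obtain ⟨k, hk⟩ := exists_nat_gt ((M + 1) / (a * (r / 2)))
    have har : 0 < a * (r / 2) := by positivity
    have hkarh : M + 1 < (k : ℝ) * (a * (r / 2)) := (div_lt_iff₀ har).mp hk
    -- choose δ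
    set δ := min (r / 2) (1 / (G k + 1)) with hδdef
    have hδ0 : 0 < δ := by
      have := hGnn k
      apply lt_min
      · positivity
      · positivity
    have hδr : δ ≤ r / 2 := min_le_left _ _
    have hδG : δ * G k < 1 := by
      have h1 : δ ≤ 1 / (G k + 1) := min_le_right _ _
      have h2 : 0 ≤ G k := hGnn k
      have h3 : δ * G k ≤ (1 / (G k + 1)) * G k := mul_le_mul_of_nonneg_right h1 h2
      have h4 : (1 / (G k + 1)) * G k < 1 := by
        rw [div_mul_eq_mul_div, div_lt_one (by linarith)]
        linarith
      linarith
    -- eventual bounds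
    have hbr : ∀ᶠ n in atTop, b n < r + δ := by
      apply eventually_lt_of_limsup_lt _ hbbd
      rw [← hrdef]; linarith
    have hev : ∀ᶠ n in atTop, a < α n ∧ α n < d ∧ ε n < δ ∧ b n < r + δ := by
      refine ((eventually_lt_of_lt_liminf halt hαbd').and
        (((eventually_lt_of_limsup_lt hdgt hαbd)).and
        ((eventually_lt_of_limsup_lt (lt_of_le_of_lt hεlimsup hδ0) hεbd).and hbr))).mono ?_
      tauto
    obtain ⟨N, hN⟩ := eventually_atTop.mp hev
    -- choose m with b m close to r
    have hfreq : ∃ᶠ m in atTop, r - δ < b m :=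
      frequently_lt_of_lt_limsup (hbbd'.isCoboundedUnder_le) (by rw [← hrdef]; linarith)
    obtain ⟨m, hmN, hmb⟩ := (frequently_atTop.mp hfreq) (N + k)
    -- KEY INDUCTION (anchored at m)
    have key : ∀ j : ℕ, ∀ n, N ≤ n → n + j = m →
        (1 + ∑ i ∈ Ico n m, α i) * b m - δ * G j ≤ ‖w m - z n‖ := by
      intro j
      induction j with
      | zero =>
        intro n hn hnm
        have he : n = m := by omega
        subst he
        simp [hG0, hbdef]
      | succ j ih =>
        intro n hn hnmeq
        have hnm : n < m := by omega
        have hA0 : 0 ≤ α n := (hα n).1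
        have hAd : α n < d := (hN n hn).2.1
        have hq : 0 < 1 - α n := by linarith
        have hid : (1 - α n) • (w m - z n) = (w m - z (n + 1)) + α n • (w n - w m) := by
          rw [hrec n]; module
        have h1 : ‖w m - z (n + 1)‖ - α n * ‖w m - w n‖ ≤ (1 - α n) * ‖w m - z n‖ := by
          have e1 : (1 - α n) * ‖w m - z n‖ = ‖(1 - α n) • (w m - z n)‖ := by
            rw [norm_smul, Real.norm_eq_abs, abs_of_nonneg hq.le]
          have e2 : ‖α n • (w n - w m)‖ = α n * ‖w m - w n‖ := by
            rw [norm_smul, Real.norm_eq_abs, abs_of_nonneg hA0, norm_sub_rev]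
          rw [e1, hid]
          have h3 : ‖w m - z (n + 1)‖ ≤ ‖(w m - z (n + 1)) + α n • (w n - w m)‖
              + ‖α n • (w n - w m)‖ := by
            have := norm_add_le ((w m - z (n + 1)) + α n • (w n - w m)) (-(α n • (w n - w m)))
            simpa using this
          linarith [e2 ▸ h3]
        have h3 : ‖w m - w n‖ ≤ ∑ i ∈ Ico n m, (α i * b i + ε i) := by
          have hd := dist_le_Ico_sum_dist w (le_of_lt hnm)
          have e : ∀ i ∈ Ico n m, dist (w i) (w (i + 1)) = α i * b i + ε i := by
            intro i _
            rw [dist_eq_norm, norm_sub_rev, hwstep i]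
          rw [Finset.sum_congr rfl e] at hd
          rwa [dist_eq_norm, norm_sub_rev] at hd
        have ih' : (1 + ∑ i ∈ Ico (n + 1) m, α i) * b m - δ * G j ≤ ‖w m - z (n + 1)‖ :=
          ih (n + 1) (by omega) (by omega)
        have hsplit : ∑ i ∈ Ico n m, α i = α n + ∑ i ∈ Ico (n + 1) m, α i :=
          Finset.sum_eq_sum_Ico_succ_bot hnm α
        have h4 : -(3 * (((j : ℝ) + 1) * δ)) ≤
            (α n + ∑ i ∈ Ico (n + 1) m, α i) * b m - ∑ i ∈ Ico n m, (α i * b i + ε i) := by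
          have hXeq : ∑ i ∈ Ico n m, (α i * (b m - b i) - ε i)
              = (∑ i ∈ Ico n m, α i) * b m - ∑ i ∈ Ico n m, (α i * b i + ε i) := by
            rw [Finset.sum_mul, ← Finset.sum_sub_distrib]
            apply Finset.sum_congr rfl
            intro i _
            ring
          have hterm : ∀ i ∈ Ico n m, -(3 * δ) ≤ α i * (b m - b i) - ε i := by
            intro i hi
            rw [Finset.mem_Ico] at hi
            have hiN : N ≤ i := le_trans hn hi.1
            have hbi : b i < r + δ := (hN i hiN).2.2.2
            have hbmi : -(2 * δ) ≤ b m - b i := by linarith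
            have hεi : ε i < δ := (hN i hiN).2.2.1
            have hα1 : α i ≤ 1 := (hα i).2
            have hαi0 : 0 ≤ α i := (hα i).1
            have hmul1 : α i * (b m - b i) ≥ -(2 * δ) := by
              nlinarith [mul_nonneg hαi0 (by linarith : (0:ℝ) ≤ b m - b i + 2 * δ),
                mul_nonneg (by positivity : (0:ℝ) ≤ 2 * δ) (by linarith : (0:ℝ) ≤ 1 - α i)]
            linarith
          have hsum := Finset.sum_le_sum hterm
          rw [Finset.sum_const, Nat.card_Ico] at hsum
          have hcard : m - n = j + 1 := by omega
          rw [hcard] at hsum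
          rw [hXeq, hsplit, nsmul_eq_mul] at hsum
          push_cast at hsum
          have hring : ((j : ℝ) + 1) * -(3 * δ) = -(3 * (((j : ℝ) + 1) * δ)) := by ring
          linarith [hsum, hring]
        have harith := suzuki_arith h1 ih' h3 h4 (hGs j) hA0 hAd.le hd1 hδ0.le
          (hGnn (j + 1)) (by positivity : (0:ℝ) ≤ (j : ℝ))
        rw [hsplit]
        exact harith
    -- FINAL CONTRADICTION
    set n := m - k with hndef
    have hnN : N ≤ n := by omega
    have hmnk : n + k = m := by omega
    have hkey := key k n hnN hmnk
    have hbm : r / 2 ≤ b m := by linarith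
    have hS0 : 0 ≤ ∑ i ∈ Ico n m, α i := by
      apply Finset.sum_nonneg
      intro i _
      exact (hα i).1
    have hSa : (k : ℝ) * a ≤ ∑ i ∈ Ico n m, α i := by
      have h := Finset.card_nsmul_le_sum (Ico n m) α a ?_
      · have hcard : m - n = k := by omega
        rwa [Nat.card_Ico, hcard, nsmul_eq_mul] at h
      · intro i hi
        rw [Finset.mem_Ico] at hi
        exact ((hN i (le_trans hnN hi.1)).1).le
    have hprod : (1 + (k : ℝ) * a) * (r / 2) ≤ (1 + ∑ i ∈ Ico n m, α i) * b m := by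
      apply mul_le_mul (by linarith) hbm (by positivity) (by linarith)
    have hcontra : M < ‖w m - z n‖ := by
      have e : (1 + (k : ℝ) * a) * (r / 2) = r / 2 + (k : ℝ) * (a * (r / 2)) := by ring
      have h5 : M < (1 + ∑ i ∈ Ico n m, α i) * b m - δ * G k := by
        linarith [hprod, hδG, hkarh, hcon]
      linarith [hkey]
    exact absurd (hM m n) (not_le.mpr hcontra)
  -- conclude convergence
  rw [Metric.tendsto_atTop]
  intro η hη
  have hev := eventually_lt_of_limsup_lt (lt_of_le_of_lt hmain hη) hbbd
  obtain ⟨N, hN⟩ := eventually_atTop.mp hev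
  exact ⟨N, fun n hn => by
    rw [Real.dist_eq, sub_zero, abs_of_nonneg (hb0 n)]
    exact hN n hn⟩
end

section
/- Let X be the space of bounded continuous real functions on [0,∞) with sup norm, {t_n} ⊆ (0,∞) with t_n → ∞ and t_{n+1}/t_n → 1, and μ_n(a) = (1/t_n) ∫_0^{t_n} a(t) dt. Then ‖μ_n − μ_{n+1}‖ → 0 in the dual norm; in fact ‖μ_n − μ_{n+1}‖ ≤ 2 − 2·min{t_n, t_{n+1}}/max{t_n, t_{n+1}} for all n. -/
/-!
For `r ≤ s`, splitting `∫_0^s = ∫_0^r + ∫_r^s` gives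
`μ_r a - μ_s a = (1/r - 1/s) ∫_0^r a - (1/s) ∫_r^s a`, and for `|a| ≤ 1` the two terms are
at most `1 - r/s` each in absolute value. Since `min/max = min (t_{n+1}/t_n) (t_n/t_{n+1}) → 1`,
the bound tends to `0`.
-/

open Filter MeasureTheory

/-- The mean `μ_r(a) = (1/r) ∫_0^r a(t) dt` on bounded continuous functions
on `[0,∞)`. -/
noncomputable def tmean (r : ℝ) (a : ℝ → ℝ) : ℝ :=
  (1 / r) * ∫ t in (0 : ℝ)..r, a t

lemma abs_intervalIntegral_le_of_abs_le {a : ℝ → ℝ} {u v M : ℝ} (huv : u ≤ v)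
    (hM : ∀ x ∈ Set.Ioc u v, |a x| ≤ M) : |∫ x in u..v, a x| ≤ M * (v - u) := by
  simpa [abs_of_nonneg (sub_nonneg.mpr huv)] using
    intervalIntegral.norm_integral_le_of_norm_le_const (f := a) (a := u) (b := v)
      (by simpa [Set.uIoc_of_le huv] using hM)

lemma tmean_sub_tmean {a : ℝ → ℝ} {r s : ℝ} (hr : IntervalIntegrable a volume 0 r)
    (hrs : IntervalIntegrable a volume r s) :
    tmean r a - tmean s a =
      (1 / r - 1 / s) * (∫ x in 0..r, a x) - 1 / s * ∫ x in r..s, a x := by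
  rw [tmean, tmean, ← intervalIntegral.integral_add_adjacent_intervals hr hrs]
  ring

lemma abs_tmean_sub_tmean_le {a : ℝ → ℝ} {r s M : ℝ} (hr : 0 < r) (hrs : r ≤ s)
    (ha : IntervalIntegrable a volume 0 s) (hM : ∀ x ∈ Set.Ioc 0 s, |a x| ≤ M) :
    |tmean r a - tmean s a| ≤ M * (2 - 2 * r / s) := by
  have hs : 0 < s := hr.trans_le hrs
  have hcoef : 0 ≤ 1 / r - 1 / s := sub_nonneg.mpr (one_div_le_one_div_of_le hr hrs)
  have hint₁ : |∫ x in 0..r, a x| ≤ M * r := by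
    simpa using abs_intervalIntegral_le_of_abs_le hr.le
      fun x hx => hM x ⟨hx.1, hx.2.trans hrs⟩
  have hint₂ : |∫ x in r..s, a x| ≤ M * (s - r) :=
    abs_intervalIntegral_le_of_abs_le hrs fun x hx => hM x ⟨hr.trans hx.1, hx.2⟩
  have hr_mem : r ∈ Set.uIcc 0 s := Set.mem_uIcc_of_le hr.le hrs
  rw [tmean_sub_tmean (ha.mono_set (Set.uIcc_subset_uIcc Set.left_mem_uIcc hr_mem))
    (ha.mono_set (Set.uIcc_subset_uIcc hr_mem Set.right_mem_uIcc))]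
  calc _ ≤ (1 / r - 1 / s) * |∫ x in 0..r, a x| + 1 / s * |∫ x in r..s, a x| := by
        refine (abs_sub _ _).trans_eq ?_
        rw [abs_mul, abs_mul, abs_of_nonneg hcoef, abs_of_pos (one_div_pos.mpr hs)]
    _ ≤ (1 / r - 1 / s) * (M * r) + 1 / s * (M * (s - r)) := by gcongr
    _ = M * (2 - 2 * r / s) := by field_simp; ring

lemma abs_tmean_sub_tmean_le_min_max {a : ℝ → ℝ} {r s M : ℝ} (hr : 0 < r) (hs : 0 < s)
    (ha : IntervalIntegrable a volume 0 (max r s))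
    (hM : ∀ x ∈ Set.Ioc 0 (max r s), |a x| ≤ M) :
    |tmean r a - tmean s a| ≤ M * (2 - 2 * min r s / max r s) := by
  rcases le_total r s with hrs | hsr
  · rw [min_eq_left hrs, max_eq_right hrs] at *
    exact abs_tmean_sub_tmean_le hr hrs ha hM
  · rw [min_eq_right hsr, max_eq_left hsr] at *
    rw [abs_sub_comm]
    exact abs_tmean_sub_tmean_le hs hsr ha hM

lemma min_div_max_eq_min_div_div {u v : ℝ} (hu : 0 < u) (hv : 0 < v) :
    min u v / max u v = min (v / u) (u / v) := by
  rcases le_total u v with huv | hvu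
  · rw [min_eq_left huv, max_eq_right huv, min_eq_right]
    exact (div_le_one hv).mpr huv |>.trans ((one_le_div hu).mpr huv)
  · rw [min_eq_right hvu, max_eq_left hvu, min_eq_left]
    exact (div_le_one hu).mpr hvu |>.trans ((one_le_div hv).mpr hvu)

lemma tendsto_min_div_max_of_tendsto_div {ι : Type*} {l : Filter ι} {u v : ι → ℝ}
    (hu : ∀ i, 0 < u i) (hv : ∀ i, 0 < v i) (h : Tendsto (fun i => v i / u i) l (nhds 1)) :
    Tendsto (fun i => min (u i) (v i) / max (u i) (v i)) l (nhds 1) := by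
  have hinv : Tendsto (fun i => u i / v i) l (nhds 1) := by
    simpa using h.inv₀ one_ne_zero
  simp_rw [min_div_max_eq_min_div_div (hu _) (hv _)]
  simpa using h.min hinv

instance : Nonempty {a : ℝ → ℝ // ContinuousOn a (Set.Ici 0) ∧
    ∀ x ∈ Set.Ici (0 : ℝ), |a x| ≤ 1} :=
  ⟨⟨0, continuousOn_const, fun x _ => by simp⟩⟩

theorem stmt15_general (t : ℕ → ℝ) (ht0 : ∀ n, 0 < t n)
    (hratio : Tendsto (fun n => t (n + 1) / t n) atTop (nhds 1)) :
    (∀ n : ℕ,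
      (⨆ a : {a : ℝ → ℝ // ContinuousOn a (Set.Ici 0) ∧
          ∀ x ∈ Set.Ici (0 : ℝ), |a x| ≤ 1},
        |tmean (t n) a.1 - tmean (t (n + 1)) a.1|)
        ≤ 2 - 2 * min (t n) (t (n + 1)) / max (t n) (t (n + 1))) ∧
    Tendsto (fun n =>
        ⨆ a : {a : ℝ → ℝ // ContinuousOn a (Set.Ici 0) ∧
            ∀ x ∈ Set.Ici (0 : ℝ), |a x| ≤ 1},
          |tmean (t n) a.1 - tmean (t (n + 1)) a.1|)
      atTop (nhds 0) := by
  have hsup : ∀ n, (⨆ a : {a : ℝ → ℝ // ContinuousOn a (Set.Ici 0) ∧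
          ∀ x ∈ Set.Ici (0 : ℝ), |a x| ≤ 1},
        |tmean (t n) a.1 - tmean (t (n + 1)) a.1|)
        ≤ 2 - 2 * min (t n) (t (n + 1)) / max (t n) (t (n + 1)) := fun n =>
    ciSup_le fun ⟨a, hcont, hle⟩ => by
      simpa using abs_tmean_sub_tmean_le_min_max (ht0 n) (ht0 (n + 1))
        ((hcont.mono Set.Icc_subset_Ici_self).intervalIntegrable_of_Icc
          (le_max_of_le_left (ht0 n).le))
        fun x hx => hle x hx.1.le
  refine ⟨hsup, squeeze_zero (fun n => Real.iSup_nonneg fun _ => abs_nonneg _) hsup ?_⟩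
  have hratio' := tendsto_min_div_max_of_tendsto_div ht0 (fun n => ht0 (n + 1)) hratio
  simpa [mul_div_assoc] using (hratio'.const_mul 2).const_sub 2

/-- For `t_n ∈ (0,∞)` with `t_n → ∞` and `t_{n+1}/t_n → 1`, the means
`μ_n(a) = (1/t_n) ∫_0^{t_n} a(t) dt` on the space of bounded continuous functions
on `[0,∞)` satisfy the dual-norm estimate
`‖μ_n - μ_{n+1}‖ ≤ 2 - 2 min{t_n,t_{n+1}}/max{t_n,t_{n+1}}` for all `n`, and
`‖μ_n - μ_{n+1}‖ → 0`; here `‖φ‖ = sup {|φ(a)| : ‖a‖_∞ ≤ 1}`. -/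
theorem stmt15 (t : ℕ → ℝ) (ht0 : ∀ n, 0 < t n)
    (htinf : Tendsto t atTop atTop)
    (hratio : Tendsto (fun n => t (n + 1) / t n) atTop (nhds 1)) :
    (∀ n : ℕ,
      (⨆ a : {a : ℝ → ℝ // ContinuousOn a (Set.Ici 0) ∧
          ∀ x ∈ Set.Ici (0 : ℝ), |a x| ≤ 1},
        |tmean (t n) a.1 - tmean (t (n + 1)) a.1|)
        ≤ 2 - 2 * min (t n) (t (n + 1)) / max (t n) (t (n + 1))) ∧
    Tendsto (fun n =>
        ⨆ a : {a : ℝ → ℝ // ContinuousOn a (Set.Ici 0) ∧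
            ∀ x ∈ Set.Ici (0 : ℝ), |a x| ≤ 1},
          |tmean (t n) a.1 - tmean (t (n + 1)) a.1|)
      atTop (nhds 0) :=
  stmt15_general t ht0 hratio
end

section
/- Let C be a nonempty compact convex subset of a Banach space E and {T(t) : t ≥ 0} a one-parameter strongly continuous semigroup of nonexpansive mappings on C. Let {t_n} ⊆ (0,∞) with t_n → ∞ and t_{n+1}/t_n → 1, {α_n} ⊆ [0,1] with 0 < liminf α_n ≤ limsup α_n < 1, and define x_{n+1} = (α_n/t_n) ∫_0^{t_n} T(s) x_n ds + (1 − α_n) x_n starting from x_1 ∈ C. Then {x_n} converges strongly to a common fixed point of {T(t) : t ≥ 0}. -/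
/-!
Write `y n` for the average `(1 / t n) ∫₀^{t n} T s (x n) ds`, so that
`x (n + 1) = α n y n + (1 - α n) x n`. Averaging is nonexpansive and `t (n + 1) / t n → 1`, hence
`‖y (n + 1) - y n‖ ≤ ‖x (n + 1) - x n‖ + o(1)`; a norming-functional argument in the spirit of
Goebel–Kirk then shows that the residuals `‖y n - x n‖` are frequently small. A cluster point `w`
of the corresponding subsequence of `x` therefore satisfies `(1 / τ) ∫₀^τ T s w ds → w` along
some `τ → ∞`.

Such a `w` is a common fixed point. Along an `ω`-limit point `z` of its orbit the semigroup moves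
rigidly, so `λ v = ‖T v z - T 0 z‖` is subadditive, and compactness makes `λ` small on a
relatively dense family of intervals. The long-run averages of `‖T u w - w‖` and of `λ` have a
common value `L` which bounds both functions pointwise; the small intervals of `λ` force `L = 0`.
Finally `‖x n - w‖` is nonincreasing, so the whole sequence converges to `w`.
-/

open Filter Set MeasureTheory intervalIntegral Topology

theorem ContinuousOn.intervalIntegrable_of_Ici {E : Type*} [NormedAddCommGroup E] {f : ℝ → E}
    (hf : ContinuousOn f (Ici 0)) ⦃a b : ℝ⦄ (ha : 0 ≤ a) (hb : 0 ≤ b) :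
    IntervalIntegrable f volume a b :=
  (hf.mono fun _ hu => le_trans (le_min ha hb) hu.1).intervalIntegrable

theorem norm_sub_le_diam {E : Type*} [SeminormedAddCommGroup E] {C : Set E}
    (hC : Bornology.IsBounded C) {x y : E} (hx : x ∈ C) (hy : y ∈ C) : ‖x - y‖ ≤ Metric.diam C := by
  rw [← dist_eq_norm]
  exact Metric.dist_le_diam_of_mem hC hx hy

section Averages

variable {E : Type*} [NormedAddCommGroup E] [NormedSpace ℝ E]

theorem interval_average_zero_eq (f : ℝ → E) (τ : ℝ) :
    ⨍ u in (0 : ℝ)..τ, f u = τ⁻¹ • ∫ u in (0 : ℝ)..τ, f u := by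
  rw [interval_average_eq, sub_zero]

theorem interval_average_zero_const [CompleteSpace E] {τ : ℝ} (hτ : τ ≠ 0) (x : E) :
    ⨍ _ in (0 : ℝ)..τ, x = x := by
  rw [interval_average_zero_eq, intervalIntegral.integral_const, sub_zero, inv_smul_smul₀ hτ]

theorem interval_average_zero_eq_of_forall [CompleteSpace E] {f : ℝ → E} {τ : ℝ} {x : E}
    (hτ : 0 < τ) (hf : ∀ u ∈ Icc 0 τ, f u = x) : ⨍ u in (0 : ℝ)..τ, f u = x := by
  rw [interval_average_zero_eq, integral_congr fun u hu => hf u (by rwa [uIcc_of_le hτ.le] at hu),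
    ← interval_average_zero_eq, interval_average_zero_const hτ.ne']

theorem interval_average_zero_sub {f g : ℝ → E} {τ : ℝ} (hf : IntervalIntegrable f volume 0 τ)
    (hg : IntervalIntegrable g volume 0 τ) :
    ⨍ u in (0 : ℝ)..τ, (f u - g u) = (⨍ u in (0 : ℝ)..τ, f u) - ⨍ u in (0 : ℝ)..τ, g u := by
  simp only [interval_average_zero_eq, integral_sub hf hg, smul_sub]

theorem norm_interval_average_zero_le {f : ℝ → E} {τ K : ℝ} (hτ : 0 < τ)
    (h : ∀ u ∈ Ioc 0 τ, ‖f u‖ ≤ K) : ‖⨍ u in (0 : ℝ)..τ, f u‖ ≤ K := by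
  have hint := norm_integral_le_of_norm_le_const (by rwa [uIoc_of_le hτ.le])
  rw [sub_zero, abs_of_pos hτ] at hint
  rw [interval_average_zero_eq, norm_smul, norm_inv, Real.norm_of_nonneg hτ.le]
  calc τ⁻¹ * ‖∫ u in (0 : ℝ)..τ, f u‖ ≤ τ⁻¹ * (K * τ) := by gcongr
    _ = K := by field_simp

theorem norm_sub_interval_average_zero_le [CompleteSpace E] {f : ℝ → E} {τ K : ℝ} (hτ : 0 < τ)
    (hf : IntervalIntegrable f volume 0 τ) (x : E) (h : ∀ u ∈ Ioc 0 τ, ‖x - f u‖ ≤ K) :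
    ‖x - ⨍ u in (0 : ℝ)..τ, f u‖ ≤ K := by
  nth_rw 1 [← interval_average_zero_const hτ.ne' x]
  rw [← interval_average_zero_sub intervalIntegrable_const hf]
  exact norm_interval_average_zero_le hτ h

theorem norm_interval_average_comp_add_sub_le {f : ℝ → E} {D t s : ℝ} (hf : ContinuousOn f (Ici 0))
    (hD : ∀ a ≥ 0, ∀ b ≥ 0, ‖f a - f b‖ ≤ D) (ht : 0 ≤ t) (hs : 0 < s) :
    ‖(⨍ u in (0 : ℝ)..s, f (t + u)) - ⨍ u in (0 : ℝ)..s, f u‖ ≤ t * D / s := by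
  have hint := hf.intervalIntegrable_of_Ici
  have key : (∫ u in (0 : ℝ)..s, f (t + u)) - ∫ u in (0 : ℝ)..s, f u
      = ∫ u in (0 : ℝ)..t, (f (s + u) - f u) := by
    have hshift : IntervalIntegrable (fun u => f (s + u)) volume 0 t := by
      simpa using
        (hint hs.le (by positivity) : IntervalIntegrable f volume s (s + t)).comp_add_left s
    rw [integral_sub hshift (hint le_rfl ht), integral_comp_add_left, integral_comp_add_left,
      add_zero, add_zero,
      ← integral_interval_sub_left (hint le_rfl (by positivity)) (hint le_rfl ht),
      ← integral_interval_sub_left (hint le_rfl (by positivity)) (hint le_rfl hs.le), add_comm s t]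
    abel
  have hbound : ‖∫ u in (0 : ℝ)..t, (f (s + u) - f u)‖ ≤ D * t := by
    have := norm_integral_le_of_norm_le_const (a := 0) (b := t) (C := D)
      (f := fun u => f (s + u) - f u) fun u hu => by
        rw [uIoc_of_le ht] at hu
        exact hD _ (by linarith [hu.1]) _ hu.1.le
    rwa [sub_zero, abs_of_nonneg ht] at this
  rw [interval_average_zero_eq, interval_average_zero_eq, ← smul_sub, key, norm_smul, norm_inv,
    Real.norm_of_nonneg hs.le]
  calc s⁻¹ * ‖∫ u in (0 : ℝ)..t, (f (s + u) - f u)‖ ≤ s⁻¹ * (D * t) := by gcongr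
    _ = t * D / s := by field_simp

theorem norm_interval_average_sub_le_of_le [CompleteSpace E] {f : ℝ → E} {D τ τ' : ℝ}
    (hf : ContinuousOn f (Ici 0)) (hD : ∀ a ≥ 0, ∀ b ≥ 0, ‖f a - f b‖ ≤ D) (hτ : 0 < τ)
    (hττ' : τ ≤ τ') :
    ‖(⨍ u in (0 : ℝ)..τ', f u) - ⨍ u in (0 : ℝ)..τ, f u‖ ≤ (τ' - τ) / τ' * D := by
  set x := ⨍ u in (0 : ℝ)..τ, f u
  have hτ' : 0 < τ' := hτ.trans_le hττ'
  have hint : ∀ ⦃a b : ℝ⦄, 0 ≤ a → 0 ≤ b → IntervalIntegrable (fun u => f u - x) volume a b :=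
    fun _ _ ha hb => (hf.sub continuousOn_const).intervalIntegrable_of_Ici ha hb
  have hzero : ∫ u in (0 : ℝ)..τ, (f u - x) = 0 := by
    have := interval_average_zero_sub (hf.intervalIntegrable_of_Ici le_rfl hτ.le)
      (intervalIntegrable_const (c := x))
    rw [interval_average_zero_const hτ.ne', sub_self, interval_average_zero_eq,
      smul_eq_zero] at this
    exact this.resolve_left (inv_ne_zero hτ.ne')
  have key : (⨍ u in (0 : ℝ)..τ', f u) - x = τ'⁻¹ • ∫ u in τ..τ', (f u - x) := by
    calc (⨍ u in (0 : ℝ)..τ', f u) - x = ⨍ u in (0 : ℝ)..τ', (f u - x) := by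
          rw [interval_average_zero_sub (hf.intervalIntegrable_of_Ici le_rfl hτ'.le)
            intervalIntegrable_const, interval_average_zero_const hτ'.ne']
      _ = τ'⁻¹ • ∫ u in (0 : ℝ)..τ', (f u - x) := interval_average_zero_eq _ _
      _ = τ'⁻¹ • ∫ u in τ..τ', (f u - x) := by
          rw [← integral_add_adjacent_intervals (hint le_rfl hτ.le) (hint hτ.le hτ'.le), hzero,
            zero_add]
  have hbound : ‖∫ u in τ..τ', (f u - x)‖ ≤ D * (τ' - τ) := by
    have := norm_integral_le_of_norm_le_const (a := τ) (b := τ') (C := D)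
      (f := fun u => f u - x) fun u hu => by
        rw [uIoc_of_le hττ'] at hu
        exact norm_sub_interval_average_zero_le hτ (hf.intervalIntegrable_of_Ici le_rfl hτ.le) _
          fun v hv => hD u (by linarith [hu.1]) v hv.1.le
    rwa [abs_of_nonneg (by linarith)] at this
  rw [key, norm_smul, norm_inv, Real.norm_of_nonneg hτ'.le]
  calc τ'⁻¹ * ‖∫ u in τ..τ', (f u - x)‖ ≤ τ'⁻¹ * (D * (τ' - τ)) := by gcongr
    _ = (τ' - τ) / τ' * D := by field_simp

theorem norm_interval_average_sub_le_mul_abs [CompleteSpace E] {f : ℝ → E} {D τ τ' : ℝ}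
    (hf : ContinuousOn f (Ici 0)) (hD : ∀ a ≥ 0, ∀ b ≥ 0, ‖f a - f b‖ ≤ D) (hτ : 0 < τ)
    (hτ' : 0 < τ') :
    ‖(⨍ u in (0 : ℝ)..τ', f u) - ⨍ u in (0 : ℝ)..τ, f u‖ ≤ D * |τ' / τ - 1| := by
  have hD0 : 0 ≤ D := by simpa using hD 0 le_rfl 0 le_rfl
  rcases le_total τ τ' with h | h
  · refine (norm_interval_average_sub_le_of_le hf hD hτ h).trans ?_
    have hle : (τ' - τ) / τ' ≤ τ' / τ - 1 := by
      rw [div_sub_one hτ.ne']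
      exact div_le_div_of_nonneg_left (by linarith) hτ h
    rw [abs_of_nonneg (hle.trans' (by positivity))]
    nlinarith
  · rw [norm_sub_rev]
    refine (norm_interval_average_sub_le_of_le hf hD hτ' h).trans (le_of_eq ?_)
    rw [abs_of_nonpos (by rw [sub_nonpos, div_le_one hτ]; exact h)]
    field_simp
    ring

theorem norm_sub_interval_average_le [CompleteSpace E] {f : ℝ → E} {φ : ℝ → ℝ} {D u s : ℝ}
    (hf : ContinuousOn f (Ici 0)) (hφ : ContinuousOn φ (Ici 0)) (hφ0 : ∀ v ≥ 0, 0 ≤ φ v)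
    (hfφ : ∀ a b, 0 ≤ a → a ≤ b → ‖f b - f a‖ ≤ φ (b - a))
    (hD : ∀ a ≥ 0, ∀ b ≥ 0, ‖f a - f b‖ ≤ D) (hu : 0 ≤ u) (hus : u ≤ s) (hs : 0 < s) :
    ‖f u - ⨍ v in (0 : ℝ)..s, f v‖ ≤ u * D / s + ⨍ v in (0 : ℝ)..s, φ v := by
  have hg : ∀ ⦃a b : ℝ⦄, 0 ≤ a → 0 ≤ b →
      IntervalIntegrable (fun v => ‖f u - f v‖) volume a b :=
    fun _ _ ha hb => (continuousOn_const.sub hf).norm.intervalIntegrable_of_Ici ha hb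
  have hdiff : f u - ⨍ v in (0 : ℝ)..s, f v = s⁻¹ • ∫ v in (0 : ℝ)..s, (f u - f v) := by
    rw [← interval_average_zero_eq, interval_average_zero_sub intervalIntegrable_const
      (hf.intervalIntegrable_of_Ici le_rfl hs.le), interval_average_zero_const hs.ne']
  have hnear : ∫ v in (0 : ℝ)..u, ‖f u - f v‖ ≤ u * D := by
    simpa using integral_mono_on hu (hg le_rfl hu) intervalIntegrable_const
      fun v hv => hD u hu v hv.1
  have hfar : ∫ v in u..s, ‖f u - f v‖ ≤ ∫ v in (0 : ℝ)..s, φ v :=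
    calc ∫ v in u..s, ‖f u - f v‖ ≤ ∫ v in u..s, φ (v - u) :=
          integral_mono_on hus (hg hu hs.le)
            ((hφ.comp (continuousOn_id.sub continuousOn_const) fun v hv => by
              rw [uIcc_of_le hus] at hv
              simpa using hv.1).intervalIntegrable)
            fun v hv => by rw [norm_sub_rev]; exact hfφ u v hu hv.1
      _ = ∫ v in (0 : ℝ)..(s - u), φ v := by rw [integral_comp_sub_right, sub_self]
      _ ≤ ∫ v in (0 : ℝ)..s, φ v :=
          integral_mono_interval le_rfl (by linarith) (by linarith)
            ((ae_restrict_mem measurableSet_Ioc).mono fun v hv => hφ0 v hv.1.le)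
            (hφ.intervalIntegrable_of_Ici le_rfl hs.le)
  rw [hdiff, norm_smul, norm_inv, Real.norm_of_nonneg hs.le, interval_average_zero_eq,
    smul_eq_mul]
  calc s⁻¹ * ‖∫ v in (0 : ℝ)..s, (f u - f v)‖ ≤ s⁻¹ * ∫ v in (0 : ℝ)..s, ‖f u - f v‖ := by
        gcongr
        exact norm_integral_le_integral_norm hs.le
    _ ≤ s⁻¹ * (u * D + ∫ v in (0 : ℝ)..s, φ v) := by
        gcongr
        rw [← integral_add_adjacent_intervals (hg le_rfl hu) (hg hu hs.le)]
        linarith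
    _ = u * D / s + s⁻¹ * ∫ v in (0 : ℝ)..s, φ v := by ring

theorem norm_sub_le_of_tendsto_interval_average [CompleteSpace E] {f : ℝ → E} {φ : ℝ → ℝ}
    {D Λ : ℝ} {w : E} {s : ℕ → ℝ} (hf : ContinuousOn f (Ici 0)) (hφ : ContinuousOn φ (Ici 0))
    (hφ0 : ∀ v ≥ 0, 0 ≤ φ v) (hfφ : ∀ a b, 0 ≤ a → a ≤ b → ‖f b - f a‖ ≤ φ (b - a))
    (hD : ∀ a ≥ 0, ∀ b ≥ 0, ‖f a - f b‖ ≤ D) (hs0 : ∀ k, 0 < s k) (hs : Tendsto s atTop atTop)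
    (hfw : Tendsto (fun k => ⨍ v in (0 : ℝ)..s k, f v) atTop (𝓝 w))
    (hφΛ : Tendsto (fun k => ⨍ v in (0 : ℝ)..s k, φ v) atTop (𝓝 Λ)) {u : ℝ} (hu : 0 ≤ u) :
    ‖f u - w‖ ≤ Λ := by
  have hlim : Tendsto (fun k => u * D / s k + (⨍ v in (0 : ℝ)..s k, φ v) +
      ‖(⨍ v in (0 : ℝ)..s k, f v) - w‖) atTop (𝓝 Λ) := by
    simpa using ((tendsto_const_nhds.div_atTop hs).add hφΛ).add
      (tendsto_iff_norm_sub_tendsto_zero.1 hfw)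
  refine ge_of_tendsto hlim ?_
  filter_upwards [hs.eventually_ge_atTop u] with k hk
  calc ‖f u - w‖ ≤ ‖f u - ⨍ v in (0 : ℝ)..s k, f v‖ + ‖(⨍ v in (0 : ℝ)..s k, f v) - w‖ :=
        norm_sub_le_norm_sub_add_norm_sub _ _ _
    _ ≤ _ := by
        gcongr
        exact norm_sub_interval_average_le hf hφ hφ0 hfφ hD hu hk (hs0 k)

end Averages

theorem integral_le_sub_mul_of_le {f : ℝ → ℝ} {a b K : ℝ} (hab : a ≤ b)
    (hf : IntervalIntegrable f volume a b) (h : ∀ u ∈ Icc a b, f u ≤ K) :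
    ∫ u in a..b, f u ≤ (b - a) * K := by
  simpa using integral_mono_on hab hf intervalIntegrable_const h

def HasLowWindows (φ : ℝ → ℝ) (η W c : ℝ) : Prop :=
  ∀ A ≥ 0, ∃ τ, A ≤ τ ∧ τ + η ≤ A + W ∧ ∀ u ∈ Icc τ (τ + η), φ u ≤ c

section RealAverages

variable {φ : ℝ → ℝ} {s : ℕ → ℝ}

theorem exists_subseq_tendsto_interval_average {B : ℝ} (hB : ∀ u ≥ 0, |φ u| ≤ B)
    (hs0 : ∀ k, 0 < s k) :
    ∃ Λ, ∃ ψ : ℕ → ℕ, StrictMono ψ ∧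
      Tendsto (fun k => ⨍ u in (0 : ℝ)..s (ψ k), φ u) atTop (𝓝 Λ) := by
  obtain ⟨Λ, -, ψ, hψ, hlim⟩ := tendsto_subseq_of_bounded (Metric.isBounded_closedBall (x := 0))
    fun k => mem_closedBall_zero_iff.2 <|
      norm_interval_average_zero_le (f := φ) (K := B) (hs0 k) fun u hu => hB u hu.1.le
  exact ⟨Λ, ψ, hψ, hlim⟩

theorem le_of_tendsto_interval_average {B c t Λ : ℝ} (hφ : ContinuousOn φ (Ici 0))
    (hB : ∀ u ≥ 0, φ u ≤ B) (ht : 0 ≤ t) (hc : ∀ u ≥ t, φ u ≤ c) (hs0 : ∀ k, 0 < s k)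
    (hs : Tendsto s atTop atTop)
    (hΛ : Tendsto (fun k => ⨍ u in (0 : ℝ)..s k, φ u) atTop (𝓝 Λ)) : Λ ≤ c := by
  have hlim : Tendsto (fun k => c + t * (B - c) / s k) atTop (𝓝 c) := by
    simpa using tendsto_const_nhds.add (tendsto_const_nhds.div_atTop hs)
  refine le_of_tendsto_of_tendsto hΛ hlim ?_
  filter_upwards [hs.eventually_ge_atTop t] with k hk
  have hint := hφ.intervalIntegrable_of_Ici
  have hsplit : ∫ u in (0 : ℝ)..s k, φ u ≤ t * B + (s k - t) * c := by
    rw [← integral_add_adjacent_intervals (hint le_rfl ht) (hint ht (hs0 k).le)]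
    have h₁ := integral_le_sub_mul_of_le ht (hint le_rfl ht) fun u hu => hB u hu.1
    have h₂ := integral_le_sub_mul_of_le hk (hint ht (hs0 k).le) fun u hu => hc u hu.1
    rw [sub_zero] at h₁
    linarith
  have hsk := hs0 k
  rw [interval_average_zero_eq, smul_eq_mul]
  calc (s k)⁻¹ * ∫ u in (0 : ℝ)..s k, φ u ≤ (s k)⁻¹ * (t * B + (s k - t) * c) := by gcongr
    _ = c + t * (B - c) / s k := by field_simp; ring

section Windows

variable {L c η W : ℝ} (hφ : ContinuousOn φ (Ici 0)) (hL : ∀ u ≥ 0, φ u ≤ L)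
  (hwin : HasLowWindows φ η W c)
include hφ hL hwin

theorem integral_window_le {A : ℝ} (hA : 0 ≤ A) (hη : 0 ≤ η) :
    ∫ u in A..A + W, φ u ≤ W * L - η * (L - c) := by
  obtain ⟨τ, hAτ, hτW, hτc⟩ := hwin A hA
  have hint := hφ.intervalIntegrable_of_Ici
  have h₁ := integral_le_sub_mul_of_le hAτ (hint hA (by linarith))
    fun u hu => hL u (by linarith [hu.1])
  have h₂ := integral_le_sub_mul_of_le (by linarith) (hint (by linarith) (by linarith)) hτc
  have h₃ := integral_le_sub_mul_of_le hτW (hint (by linarith) (by linarith))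
    fun u hu => hL u (by linarith [hu.1])
  have e₁ := integral_add_adjacent_intervals (hint hA (by linarith) : IntervalIntegrable φ _ A τ)
    (hint (by linarith) (by linarith) : IntervalIntegrable φ _ τ (A + W))
  have e₂ := integral_add_adjacent_intervals
    (hint (by linarith) (by linarith) : IntervalIntegrable φ _ τ (τ + η))
    (hint (by linarith) (by linarith) : IntervalIntegrable φ _ (τ + η) (A + W))
  have e₃ : (τ - A) * L + (τ + η - τ) * c + (A + W - (τ + η)) * L = W * L - η * (L - c) := by
    ring
  linarith

theorem integral_le_of_windows (hη : 0 ≤ η) (hW : 0 < W) (hcL : c ≤ L) {s : ℝ} (hs : 0 ≤ s) :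
    ∫ u in (0 : ℝ)..s, φ u ≤ s * (L - η / W * (L - c)) + η * (L - c) := by
  have hint := hφ.intervalIntegrable_of_Ici
  have hfull : ∀ n : ℕ, ∫ u in (0 : ℝ)..n * W, φ u ≤ n * (W * L - η * (L - c)) := by
    intro n
    induction n with
    | zero => simp
    | succ n ih =>
      have hnW : (0 : ℝ) ≤ n * W := by positivity
      have hstep := integral_window_le hφ hL hwin hnW hη
      rw [Nat.cast_succ, add_one_mul, ← integral_add_adjacent_intervals (hint le_rfl hnW)
        (hint hnW (by positivity))]
      linarith
  set n := ⌊s / W⌋₊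
  have hn₁ : n * W ≤ s := (le_div_iff₀ hW).1 (Nat.floor_le (div_nonneg hs hW.le))
  have hn₂ : s / W ≤ n + 1 := (Nat.lt_floor_add_one (s / W)).le
  have hnW : (0 : ℝ) ≤ n * W := by positivity
  have htail := integral_le_sub_mul_of_le hn₁ (hint hnW hs) fun u hu => hL u (hnW.trans hu.1)
  rw [← integral_add_adjacent_intervals (hint le_rfl hnW) (hint hnW hs)]
  have hκ : 0 ≤ η * (L - c) := mul_nonneg hη (sub_nonneg.2 hcL)
  have hrw : s * (L - η / W * (L - c)) = s * L - s / W * (η * (L - c)) := by ring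
  nlinarith [hfull n]

theorem le_of_tendsto_interval_average_of_windows (hη : 0 < η) (hW : 0 < W) {Λ : ℝ}
    (hs0 : ∀ k, 0 < s k) (hs : Tendsto s atTop atTop)
    (hΛ : Tendsto (fun k => ⨍ u in (0 : ℝ)..s k, φ u) atTop (𝓝 Λ)) (hLΛ : L ≤ Λ) : L ≤ c := by
  by_contra! hcL
  have hκ : 0 < η / W * (L - c) := by have := sub_pos.2 hcL; positivity
  have hlim : Tendsto (fun k => L - η / W * (L - c) + η * (L - c) / s k) atTop
      (𝓝 (L - η / W * (L - c))) := by
    simpa using tendsto_const_nhds.add (tendsto_const_nhds.div_atTop hs)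
  have hΛle : Λ ≤ L - η / W * (L - c) := le_of_tendsto_of_tendsto hΛ hlim <|
    Eventually.of_forall fun k => by
      have hsk := hs0 k
      have := integral_le_of_windows hφ hL hwin hη.le hW hcL.le hsk.le
      dsimp only
      rw [interval_average_zero_eq, smul_eq_mul]
      calc (s k)⁻¹ * ∫ u in (0 : ℝ)..s k, φ u
          ≤ (s k)⁻¹ * (s k * (L - η / W * (L - c)) + η * (L - c)) := by gcongr
        _ = L - η / W * (L - c) + η * (L - c) / s k := by field_simp
  linarith

end Windows

end RealAverages

theorem exists_near_return {X : Type*} [PseudoMetricSpace X] {h : ℝ → X}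
    (hK : TotallyBounded (h '' Ici 0)) {ε : ℝ} (hε : 0 < ε) :
    ∃ ℓ ≥ 0, ∀ A ≥ 0, ∃ σ ≥ 0, ∃ τ ∈ Icc A (A + ℓ), dist (h (σ + τ)) (h σ) < ε := by
  obtain ⟨S, hS, hSfin, hcover⟩ : ∃ S ⊆ Ici (0 : ℝ), S.Finite ∧
      h '' Ici 0 ⊆ ⋃ y ∈ h '' S, Metric.ball y ε := by
    obtain ⟨t, hts, htfin, hcov⟩ := Metric.finite_approx_of_totallyBounded hK ε hε
    exact exists_subset_image_finite_and (p := fun t => h '' Ici 0 ⊆ ⋃ y ∈ t, Metric.ball y ε)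
      |>.1 ⟨t, hts, htfin, hcov⟩
  obtain ⟨B, hB⟩ := hSfin.bddAbove
  refine ⟨max B 0, le_max_right _ _, fun A hA => ?_⟩
  obtain ⟨_, ⟨σ, hσS, rfl⟩, hσ⟩ := mem_iUnion₂.1 <|
    hcover (mem_image_of_mem h (show A + max B 0 ∈ Ici 0 from add_nonneg hA (le_max_right _ _)))
  have hσ0 : 0 ≤ σ := hS hσS
  have hσB : σ ≤ max B 0 := (hB hσS).trans (le_max_left _ _)
  refine ⟨σ, hσ0, A + max B 0 - σ, ⟨by linarith, by linarith⟩, ?_⟩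
  rwa [add_sub_cancel]

section Mann

variable {E : Type*} [NormedAddCommGroup E] [NormedSpace ℝ E]

theorem apply_le_norm_of_norm_le_one {f : StrongDual ℝ E} (hf : ‖f‖ ≤ 1) (v : E) : f v ≤ ‖v‖ :=
  (Real.le_norm_self _).trans ((f.le_opNorm v).trans (mul_le_of_le_one_left (norm_nonneg v) hf))

section Step

variable {x y x' y' : E} {β δ : ℝ} (hβ : β ∈ Icc (0 : ℝ) 1) (hx' : x' = β • y + (1 - β) • x)
  (hdrift : ‖y' - y‖ ≤ ‖x' - x‖ + δ)
include hβ hx' hdrift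

theorem apply_sub_le_of_mann_step {f : StrongDual ℝ E} (hf : ‖f‖ ≤ 1) :
    f (y' - x') ≤ β * ‖y - x‖ + δ + (1 - β) * f (y - x) := by
  have hsplit : y' - x' = (y' - y) + (1 - β) • (y - x) := by rw [hx']; module
  have hstep : x' - x = β • (y - x) := by rw [hx']; module
  rw [hstep, norm_smul, Real.norm_of_nonneg hβ.1] at hdrift
  rw [hsplit, map_add, map_smul, smul_eq_mul]
  linarith [apply_le_norm_of_norm_le_one hf (y' - y)]

theorem norm_sub_le_of_mann_step : ‖y' - x'‖ ≤ ‖y - x‖ + δ := by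
  obtain ⟨f, hf, hfv⟩ := exists_dual_vector'' ℝ (y' - x')
  have hstep := apply_sub_le_of_mann_step hβ hx' hdrift hf
  have hf_le : (1 - β) * f (y - x) ≤ (1 - β) * ‖y - x‖ :=
    mul_le_mul_of_nonneg_left (apply_le_norm_of_norm_le_one hf _) (sub_nonneg.2 hβ.2)
  have hfv' : f (y' - x') = ‖y' - x'‖ := hfv
  linarith

end Step

theorem le_mul_div_pow_of_mul_le_add {e : ℕ → ℝ} {q θ : ℝ} {k : ℕ} (hq : 0 < q) (hq1 : q ≤ 1)
    (hθ : 0 ≤ θ) (he0 : e 0 ≤ 0) (he : ∀ i < k, q * e (i + 1) ≤ e i + θ) :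
    ∀ i ≤ k, e i ≤ k * θ / q ^ k := by
  have hlin : ∀ i ≤ k, e i ≤ i * θ / q ^ i := by
    intro i
    induction i with
    | zero => simpa using he0
    | succ i ih =>
      intro hik
      have hqi : 0 < q ^ i := pow_pos hq i
      have hθq : θ ≤ θ / q ^ i := le_div_self hθ hqi (pow_le_one₀ hq.le hq1)
      have hstep := he i hik
      have ih := ih (by omega)
      rw [pow_succ, le_div_iff₀ (by positivity)]
      calc e (i + 1) * (q ^ i * q) = q ^ i * (q * e (i + 1)) := by ring
        _ ≤ q ^ i * (i * θ / q ^ i + θ / q ^ i) := by gcongr; linarith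
        _ = (i + 1 : ℕ) * θ := by field_simp; push_cast; ring
  intro i hik
  exact (hlin i hik).trans (div_le_div₀ (by positivity) (by gcongr) (pow_pos hq k)
    (pow_le_pow_of_le_one hq.le hq1 hik))

section Segment

variable {x y : ℕ → E} {α : ℕ → ℝ} {b δ : ℝ} {j k : ℕ}
  (hrec : ∀ l ∈ Ico j (j + k), x (l + 1) = α l • y l + (1 - α l) • x l)
  (hdrift : ∀ l ∈ Ico j (j + k), ‖y (l + 1) - y l‖ ≤ ‖x (l + 1) - x l‖ + δ)
include hrec hdrift

theorem norm_sub_le_add_mul_of_mann_segment (hα : ∀ l ∈ Ico j (j + k), α l ∈ Icc (0 : ℝ) 1) :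
    ∀ i ≤ k, ‖y (j + i) - x (j + i)‖ ≤ ‖y j - x j‖ + i * δ := by
  intro i
  induction i with
  | zero => simp
  | succ i ih =>
    intro hik
    have hl : j + i ∈ Ico j (j + k) := ⟨by omega, by omega⟩
    have := norm_sub_le_of_mann_step (hα _ hl) (hrec _ hl) (hdrift _ hl)
    rw [← add_assoc]
    push_cast
    linarith [ih (by omega)]

/-- The defect `‖y l - x l‖ - f (y l - x l)` vanishes at `l = j + k` and, since the residuals
stay within `δ` of `ρ`, grows backwards by at most a factor `1 / (1 - b)` per step. -/
theorem half_le_apply_of_mann_segment {ρ : ℝ} (hb : b < 1)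
    (hα : ∀ l ∈ Ico j (j + k), α l ∈ Icc 0 b)
    (hlow : ∀ l ∈ Icc j (j + k), ρ - δ < ‖y l - x l‖) (hj : ‖y j - x j‖ < ρ + δ)
    (hδ : 0 ≤ δ) (hδρ : 2 * δ * ((k + 3) * k / (1 - b) ^ k + 1) ≤ ρ) {f : StrongDual ℝ E}
    (hf : ‖f‖ ≤ 1) (hfm : f (y (j + k) - x (j + k)) = ‖y (j + k) - x (j + k)‖) :
    ∀ i < k, ρ / 2 ≤ f (y (j + i) - x (j + i)) := by
  intro i hi
  set r : ℕ → ℝ := fun l => ‖y l - x l‖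
  set φ : ℕ → ℝ := fun l => f (y l - x l)
  set q := 1 - b
  have hq : 0 < q := sub_pos.2 hb
  have hα₁ : ∀ l ∈ Ico j (j + k), α l ∈ Icc (0 : ℝ) 1 :=
    fun l hl => ⟨(hα l hl).1, (hα l hl).2.trans hb.le⟩
  have hr_up := norm_sub_le_add_mul_of_mann_segment hrec hdrift hα₁
  have hrel : ∀ l ∈ Ico j (j + k), q * (r l - φ l) ≤ (r (l + 1) - φ (l + 1)) + (k + 3) * δ := by
    intro l hl
    obtain ⟨i, rfl⟩ : ∃ i, l = j + i := ⟨l - j, by have := hl.1; omega⟩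
    have hik : i < k := by linarith [hl.2]
    have hr_l : r (j + i) ≤ ρ + δ + k * δ := by
      have hik' : (i : ℝ) ≤ k := by exact_mod_cast hik.le
      nlinarith [hr_up i hik.le]
    have hq_α : q * (r (j + i) - φ (j + i)) ≤ (1 - α (j + i)) * (r (j + i) - φ (j + i)) :=
      mul_le_mul_of_nonneg_right (by linarith [(hα _ hl).2])
        (by linarith [apply_le_norm_of_norm_le_one hf (y (j + i) - x (j + i))])
    linarith [apply_sub_le_of_mann_step (hα₁ _ hl) (hrec _ hl) (hdrift _ hl) hf,
      hlow (j + i + 1) ⟨by omega, by omega⟩]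
  have he := le_mul_div_pow_of_mul_le_add (e := fun i => r (j + k - i) - φ (j + k - i))
    (θ := (k + 3) * δ) (k := k) hq (by linarith [(hα j ⟨le_rfl, by omega⟩).1,
      (hα j ⟨le_rfl, by omega⟩).2]) (by positivity)
    (by simp only [Nat.sub_zero, φ, hfm, r, sub_self, le_refl])
    fun i hi => by
      have := hrel (j + k - (i + 1)) ⟨by omega, by omega⟩
      rwa [show j + k - (i + 1) + 1 = j + k - i by omega] at this
  have h₁ := he (k - i) (by omega)
  simp only [show j + k - (k - i) = j + i by omega] at h₁
  have h₂ : (k : ℝ) * ((k + 3) * δ) / q ^ k = δ * ((k + 3) * k / q ^ k) := by ring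
  linarith [hlow (j + i) ⟨by omega, by omega⟩]

theorem mul_le_of_mann_segment {a ρ D : ℝ} (ha : 0 < a) (hb : b < 1)
    (hα : ∀ l ∈ Ico j (j + k), α l ∈ Icc a b)
    (hlow : ∀ l ∈ Icc j (j + k), ρ - δ < ‖y l - x l‖) (hj : ‖y j - x j‖ < ρ + δ)
    (hδ : 0 ≤ δ) (hδρ : 2 * δ * ((k + 3) * k / (1 - b) ^ k + 1) ≤ ρ)
    (hD : ‖x (j + k) - x j‖ ≤ D) : k * (a * ρ / 2) ≤ D := by
  obtain rfl | hk := k.eq_zero_or_pos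
  · simpa using (norm_nonneg _).trans hD
  have hK : 0 ≤ (k + 3) * k / (1 - b) ^ k := by have := sub_pos.2 hb; positivity
  obtain ⟨f, hf, hfm⟩ := exists_dual_vector ℝ (y (j + k) - x (j + k))
    (by nlinarith [hlow (j + k) ⟨by omega, le_rfl⟩, mul_nonneg hδ hK])
  have hρ : 0 ≤ ρ := by nlinarith [mul_nonneg hδ hK]
  have hhalf := half_le_apply_of_mann_segment hrec hdrift hb
    (fun l hl => ⟨ha.le.trans (hα l hl).1, (hα l hl).2⟩) hlow hj hδ hδρ hf.le hfm
  have htel : x (j + k) - x j = ∑ i ∈ Finset.range k, α (j + i) • (y (j + i) - x (j + i)) := by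
    have := Finset.sum_range_sub (fun i => x (j + i)) k
    rw [add_zero] at this
    rw [← this]
    refine Finset.sum_congr rfl fun i hi => ?_
    simp only [Finset.mem_range] at hi
    rw [← add_assoc, hrec (j + i) ⟨by omega, by omega⟩]
    module
  calc (k : ℝ) * (a * ρ / 2) = ∑ _i ∈ Finset.range k, a * (ρ / 2) := by
        rw [Finset.sum_const, Finset.card_range, nsmul_eq_mul]
        ring
    _ ≤ ∑ i ∈ Finset.range k, f (α (j + i) • (y (j + i) - x (j + i))) := by
        refine Finset.sum_le_sum fun i hi => ?_
        simp only [Finset.mem_range] at hi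
        have hαi := hα (j + i) ⟨by omega, by omega⟩
        rw [map_smul, smul_eq_mul]
        exact mul_le_mul hαi.1 (hhalf i hi) (by linarith) (ha.le.trans hαi.1)
    _ = f (x (j + k) - x j) := by rw [htel, map_sum]
    _ ≤ D := (apply_le_norm_of_norm_le_one hf.le _).trans hD

end Segment

theorem frequently_norm_sub_lt_of_mann {x y : ℕ → E} {α c : ℕ → ℝ} {a b : ℝ} {K : Set E}
    (hK : Bornology.IsBounded K) (hx : ∀ᶠ n in atTop, x n ∈ K) (hy : ∀ᶠ n in atTop, y n ∈ K)
    (ha : 0 < a) (hb : b < 1) (hα : ∀ᶠ n in atTop, α n ∈ Icc a b)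
    (hrec : ∀ᶠ n in atTop, x (n + 1) = α n • y n + (1 - α n) • x n)
    (hdrift : ∀ᶠ n in atTop, ‖y (n + 1) - y n‖ ≤ ‖x (n + 1) - x n‖ + c n)
    (hc : Tendsto c atTop (𝓝 0)) {ε : ℝ} (hε : 0 < ε) : ∃ᶠ n in atTop, ‖y n - x n‖ < ε := by
  by_contra hfar
  simp only [not_frequently, not_lt] at hfar
  have hbdd : IsBoundedUnder (· ≤ ·) atTop fun n => ‖y n - x n‖ :=
    isBoundedUnder_of_eventually_le ((hx.and hy).mono fun n h => norm_sub_le_diam hK h.2 h.1)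
  set ρ := liminf (fun n => ‖y n - x n‖) atTop
  have hρ : 0 < ρ := hε.trans_le (le_liminf_of_le hbdd.isCoboundedUnder_flip hfar)
  obtain ⟨k, hk⟩ := exists_nat_gt (Metric.diam K / (a * ρ / 2))
  have hq : 0 < 1 - b := sub_pos.2 hb
  set δ := ρ / (2 * ((k + 3) * k / (1 - b) ^ k + 1))
  have hδ : 0 < δ := by positivity
  have hδρ : 2 * δ * ((k + 3) * k / (1 - b) ^ k + 1) = ρ := by
    simp only [δ]
    field_simp
  have hlow : ∀ᶠ n in atTop, ρ - δ < ‖y n - x n‖ := eventually_lt_of_lt_liminf (by linarith)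
    (isBoundedUnder_of_eventually_ge (Eventually.of_forall fun n => norm_nonneg _))
  have hdrift' : ∀ᶠ n in atTop, ‖y (n + 1) - y n‖ ≤ ‖x (n + 1) - x n‖ + δ :=
    (hdrift.and (hc.eventually (eventually_le_nhds hδ))).mono fun n h => by linarith [h.1, h.2]
  obtain ⟨N, hN⟩ := eventually_atTop.1 (hα.and (hrec.and (hdrift'.and (hlow.and hx))))
  obtain ⟨j, hjN, hj⟩ := frequently_atTop.1
    (frequently_lt_of_liminf_lt hbdd.isCoboundedUnder_flip (show ρ < ρ + δ by linarith)) N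
  have hseg := mul_le_of_mann_segment (j := j) (k := k)
    (fun l hl => (hN l (hjN.trans hl.1)).2.1) (fun l hl => (hN l (hjN.trans hl.1)).2.2.1) ha hb
    (fun l hl => (hN l (hjN.trans hl.1)).1) (fun l hl => (hN l (hjN.trans hl.1)).2.2.2.1)
    hj hδ.le hδρ.le
    (norm_sub_le_diam hK (hN (j + k) (by omega)).2.2.2.2 (hN j hjN).2.2.2.2)
  rw [div_lt_iff₀ (by positivity)] at hk
  linarith

end Mann

theorem exists_eventually_mem_Icc_of_liminf_pos {α : ℕ → ℝ} (hα : ∀ n, α n ∈ Icc (0 : ℝ) 1)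
    (h₁ : 0 < liminf α atTop) (h₂ : limsup α atTop < 1) :
    ∃ a b, 0 < a ∧ b < 1 ∧ ∀ᶠ n in atTop, α n ∈ Icc a b := by
  refine ⟨liminf α atTop / 2, (limsup α atTop + 1) / 2, by linarith, by linarith, ?_⟩
  filter_upwards [eventually_lt_of_lt_liminf (b := liminf α atTop / 2) (by linarith)
      (isBoundedUnder_of_eventually_ge (.of_forall fun n => (hα n).1)),
    eventually_lt_of_limsup_lt (b := (limsup α atTop + 1) / 2) (by linarith)
      (isBoundedUnder_of_eventually_le (.of_forall fun n => (hα n).2))] with n h₁ h₂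
  exact ⟨h₁.le, h₂.le⟩

theorem tendsto_of_tendsto_subseq_of_norm_sub_le {E : Type*} [SeminormedAddCommGroup E]
    {x : ℕ → E} {w : E} {N : ℕ} (hmono : ∀ n ≥ N, ‖x (n + 1) - w‖ ≤ ‖x n - w‖) {ψ : ℕ → ℕ}
    (hψ : StrictMono ψ) (hsub : Tendsto (x ∘ ψ) atTop (𝓝 w)) : Tendsto x atTop (𝓝 w) := by
  have hanti : ∀ m ≥ N, ∀ n ≥ m, ‖x n - w‖ ≤ ‖x m - w‖ := fun m hm n hmn => by
    induction n, hmn using Nat.le_induction with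
    | base => exact le_rfl
    | succ n hmn ih => exact (hmono n (hm.trans hmn)).trans ih
  refine Metric.tendsto_atTop.2 fun ε hε => ?_
  obtain ⟨k, hkN, hk⟩ := ((hψ.tendsto_atTop.eventually_ge_atTop N).and
    (hsub.eventually (Metric.ball_mem_nhds w hε))).exists
  refine ⟨ψ k, fun n hn => ?_⟩
  rw [dist_eq_norm]
  exact (hanti _ hkN n hn).trans_lt (by simpa [dist_eq_norm] using hk)

structure IsNonexpansiveSemigroup {E : Type*} [NormedAddCommGroup E] (C : Set E)
    (T : ℝ → E → E) : Prop where
  mapsTo : ∀ t, 0 ≤ t → MapsTo (T t) C C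
  norm_sub_le : ∀ t, 0 ≤ t → ∀ x ∈ C, ∀ y ∈ C, ‖T t x - T t y‖ ≤ ‖x - y‖
  add_apply : ∀ s t, 0 ≤ s → 0 ≤ t → ∀ x ∈ C, T (s + t) x = T s (T t x)
  continuousOn : ∀ x ∈ C, ContinuousOn (fun t => T t x) (Ici 0)

namespace IsNonexpansiveSemigroup

variable {E : Type*} [NormedAddCommGroup E] {C : Set E} {T : ℝ → E → E}
  (S : IsNonexpansiveSemigroup C T)
include S

theorem apply_mem {t : ℝ} (ht : 0 ≤ t) {x : E} (hx : x ∈ C) : T t x ∈ C :=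
  S.mapsTo t ht hx

theorem norm_add_apply_sub_add_apply_le {x : E} (hx : x ∈ C) {σ a b : ℝ} (hσ : 0 ≤ σ)
    (ha : 0 ≤ a) (hb : 0 ≤ b) : ‖T (σ + a) x - T (σ + b) x‖ ≤ ‖T a x - T b x‖ := by
  rw [S.add_apply σ a hσ ha x hx, S.add_apply σ b hσ hb x hx]
  exact S.norm_sub_le σ hσ _ (S.apply_mem ha hx) _ (S.apply_mem hb hx)

theorem norm_apply_sub_apply_le {x : E} (hx : x ∈ C) {u v : ℝ} (hu : 0 ≤ u) (huv : u ≤ v) :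
    ‖T v x - T u x‖ ≤ ‖T (v - u) x - x‖ := by
  have hvu : 0 ≤ v - u := sub_nonneg.2 huv
  calc ‖T v x - T u x‖ = ‖T (u + (v - u)) x - T (u + 0) x‖ := by
        rw [add_sub_cancel, add_zero]
    _ ≤ ‖T (v - u) x - T 0 x‖ := S.norm_add_apply_sub_add_apply_le hx hu hvu le_rfl
    _ = ‖T 0 (T (v - u) x) - T 0 x‖ := by rw [← S.add_apply 0 _ le_rfl hvu x hx, zero_add]
    _ ≤ ‖T (v - u) x - x‖ := S.norm_sub_le 0 le_rfl _ (S.apply_mem hvu hx) _ hx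

theorem norm_apply_add_sub_apply_le {x z : E} (hx : x ∈ C) (hz : z ∈ C) {t u : ℝ} (ht : 0 ≤ t)
    (hu : 0 ≤ u) : ‖T (u + t) x - T u z‖ ≤ ‖T t x - z‖ := by
  rw [S.add_apply u t hu ht x hx]
  exact S.norm_sub_le u hu _ (S.apply_mem ht hx) _ hz

theorem intervalIntegrable_apply {x : E} (hx : x ∈ C) ⦃a b : ℝ⦄ (ha : 0 ≤ a) (hb : 0 ≤ b) :
    IntervalIntegrable (fun u => T u x) volume a b :=
  (S.continuousOn x hx).intervalIntegrable_of_Ici ha hb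

theorem interval_average_mem [NormedSpace ℝ E] [CompleteSpace E] (hC : IsClosed C)
    (hCconv : Convex ℝ C) {x : E} (hx : x ∈ C) {τ : ℝ} (hτ : 0 < τ) :
    ⨍ u in (0 : ℝ)..τ, T u x ∈ C := by
  refine hCconv.set_average_mem hC ?_ (by simp) ?_ ?_
  · simp [uIoc_of_le hτ.le, hτ]
  · exact (ae_restrict_mem measurableSet_uIoc).mono fun u hu =>
      S.apply_mem (by rw [uIoc_of_le hτ.le] at hu; exact hu.1.le) hx
  · exact (intervalIntegrable_iff.1 (S.intervalIntegrable_apply hx le_rfl hτ.le))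

theorem norm_interval_average_sub_le [NormedSpace ℝ E] {x y : E} (hx : x ∈ C) (hy : y ∈ C)
    {τ : ℝ} (hτ : 0 < τ) :
    ‖(⨍ u in (0 : ℝ)..τ, T u x) - ⨍ u in (0 : ℝ)..τ, T u y‖ ≤ ‖x - y‖ := by
  rw [← interval_average_zero_sub (S.intervalIntegrable_apply hx le_rfl hτ.le)
    (S.intervalIntegrable_apply hy le_rfl hτ.le)]
  exact norm_interval_average_zero_le hτ fun u hu => S.norm_sub_le u hu.1.le x hx y hy

section OmegaLimit

variable {w z : E} {t : ℕ → ℝ} (hw : w ∈ C) (hz : z ∈ C) (ht0 : ∀ j, 0 ≤ t j)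
  (htz : Tendsto (fun j => T (t j) w) atTop (𝓝 z))
include hw hz ht0 htz

theorem tendsto_apply_add {a : ℝ} (ha : 0 ≤ a) :
    Tendsto (fun j => T (a + t j) w) atTop (𝓝 (T a z)) :=
  tendsto_iff_norm_sub_tendsto_zero.2 <| squeeze_zero (fun _ => norm_nonneg _)
    (fun j => S.norm_apply_add_sub_apply_le hw hz (ht0 j) ha)
    (tendsto_iff_norm_sub_tendsto_zero.1 htz)

theorem norm_apply_sub_apply_zero_le {v : ℝ} (hv : 0 ≤ v) :
    ‖T v z - T 0 z‖ ≤ ‖T v w - w‖ := by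
  refine le_of_tendsto (((S.tendsto_apply_add hw hz ht0 htz hv).sub
    (S.tendsto_apply_add hw hz ht0 htz le_rfl)).norm) (Eventually.of_forall fun j => ?_)
  calc ‖T (v + t j) w - T (0 + t j) w‖ = ‖T (t j + v) w - T (t j + 0) w‖ := by
        rw [add_comm v, zero_add, add_zero]
    _ ≤ ‖T v w - T 0 w‖ := S.norm_add_apply_sub_add_apply_le hw (ht0 j) hv le_rfl
    _ ≤ ‖T v w - w‖ := by simpa using S.norm_apply_sub_apply_le hw le_rfl hv

/-- Both sides are the limit of the nonincreasing quantity `‖T (σ + v) w - T σ w‖` as `σ → ∞`. -/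
theorem norm_apply_add_sub_apply_eq (ht : Tendsto t atTop atTop) {u v : ℝ} (hu : 0 ≤ u)
    (hv : 0 ≤ v) : ‖T (u + v) z - T u z‖ = ‖T v z - T 0 z‖ := by
  set N : ℝ → ℝ := fun σ => ‖T (max σ 0 + v) w - T (max σ 0) w‖
  have hN : Antitone N := fun σ σ' hσσ' => by
    have hd : 0 ≤ max σ' 0 - max σ 0 := sub_nonneg.2 (max_le_max hσσ' le_rfl)
    calc N σ' = ‖T ((max σ' 0 - max σ 0) + (max σ 0 + v)) w
          - T ((max σ' 0 - max σ 0) + max σ 0) w‖ := by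
          simp only [N, sub_add_cancel, ← add_assoc]
      _ ≤ N σ := S.norm_add_apply_sub_add_apply_le hw hd (by positivity) (le_max_right _ _)
  have hNlim := tendsto_atTop_ciInf hN ⟨0, by rintro _ ⟨σ, rfl⟩; exact norm_nonneg _⟩
  have key : ∀ u ≥ 0, ‖T (u + v) z - T u z‖ = ⨅ σ, N σ := fun u hu => by
    refine tendsto_nhds_unique ?_ (hNlim.comp (tendsto_atTop_add_const_left _ u ht))
    refine (((S.tendsto_apply_add hw hz ht0 htz (add_nonneg hu hv)).sub
      (S.tendsto_apply_add hw hz ht0 htz hu)).norm).congr fun j => ?_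
    simp only [N, Function.comp, max_eq_left (add_nonneg hu (ht0 j))]
    rw [add_right_comm]
  rw [key u hu, ← key 0 le_rfl, zero_add]

theorem tendsto_interval_average_apply [NormedSpace ℝ E] (hC : Bornology.IsBounded C)
    {s : ℕ → ℝ} (hs0 : ∀ k, 0 < s k) (hs : Tendsto s atTop atTop)
    (havg : Tendsto (fun k => ⨍ u in (0 : ℝ)..s k, T u w) atTop (𝓝 w)) :
    Tendsto (fun k => ⨍ u in (0 : ℝ)..s k, T u z) atTop (𝓝 w) := by
  refine Metric.tendsto_nhds.2 fun ε hε => ?_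
  obtain ⟨j, hj⟩ := (Metric.tendsto_nhds.1 htz (ε / 3) (by positivity)).exists
  have hshift : ∀ᶠ k in atTop, t j * Metric.diam C / s k < ε / 3 :=
    (tendsto_const_nhds.div_atTop hs).eventually (gt_mem_nhds (by positivity))
  filter_upwards [hshift, Metric.tendsto_nhds.1 havg (ε / 3) (by positivity)] with k hk₁ hk₂
  rw [dist_eq_norm] at hj hk₂ ⊢
  have hsk := hs0 k
  have hint : IntervalIntegrable (fun u => T (t j + u) w) volume 0 (s k) :=
    ((S.continuousOn w hw).comp (continuousOn_const.add continuousOn_id)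
      fun u hu => add_nonneg (ht0 j) hu).intervalIntegrable_of_Ici le_rfl hsk.le
  have h₁ : ‖(⨍ u in (0 : ℝ)..s k, T u z) - ⨍ u in (0 : ℝ)..s k, T (t j + u) w‖
      ≤ ‖T (t j) w - z‖ := by
    rw [← interval_average_zero_sub (S.intervalIntegrable_apply hz le_rfl hsk.le) hint]
    refine norm_interval_average_zero_le hsk fun u hu => ?_
    rw [norm_sub_rev, add_comm]
    exact S.norm_apply_add_sub_apply_le hw hz (ht0 j) hu.1.le
  have h₂ := norm_interval_average_comp_add_sub_le (S.continuousOn w hw)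
    (fun a ha b hb => norm_sub_le_diam hC (S.apply_mem ha hw) (S.apply_mem hb hw)) (ht0 j) hsk
  have h₃ := norm_sub_le_norm_sub_add_norm_sub (⨍ u in (0 : ℝ)..s k, T u z)
    (⨍ u in (0 : ℝ)..s k, T (t j + u) w) w
  have h₄ := norm_sub_le_norm_sub_add_norm_sub (⨍ u in (0 : ℝ)..s k, T (t j + u) w)
    (⨍ u in (0 : ℝ)..s k, T u w) w
  linarith

theorem exists_hasLowWindows (hC : IsCompact C) (ht : Tendsto t atTop atTop) {ε : ℝ}
    (hε : 0 < ε) : ∃ η > 0, ∃ W ≥ η, HasLowWindows (fun u => ‖T u z - T 0 z‖) η W (2 * ε) := by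
  obtain ⟨δ, hδ, hcont⟩ :=
    Metric.continuousWithinAt_iff.1 (S.continuousOn z hz 0 self_mem_Ici) ε hε
  have hsmall : ∀ v ∈ Icc 0 (δ / 2), ‖T v z - T 0 z‖ ≤ ε := fun v hv => by
    rw [← dist_eq_norm]
    refine (hcont hv.1 ?_).le
    rw [Real.dist_eq, sub_zero, abs_of_nonneg hv.1]
    linarith [hv.2]
  obtain ⟨ℓ, hℓ, hret⟩ := exists_near_return (h := fun u => T u z)
    (hC.totallyBounded.subset (image_subset_iff.2 fun u hu => S.apply_mem hu hz)) hε
  refine ⟨δ / 2, by positivity, ℓ + δ / 2, by linarith, fun A hA => ?_⟩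
  obtain ⟨σ, hσ, τ, ⟨hAτ, hτℓ⟩, hdist⟩ := hret A hA
  have hτ0 : 0 ≤ τ := hA.trans hAτ
  have hτ : ‖T τ z - T 0 z‖ < ε := by
    rwa [← S.norm_apply_add_sub_apply_eq hw hz ht0 htz ht hσ hτ0, ← dist_eq_norm]
  refine ⟨τ, hAτ, by linarith, fun u hu => ?_⟩
  have hvu : 0 ≤ u - τ := by linarith [hu.1]
  calc ‖T u z - T 0 z‖ ≤ ‖T (τ + (u - τ)) z - T τ z‖ + ‖T τ z - T 0 z‖ := by
        rw [add_sub_cancel]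
        exact norm_sub_le_norm_sub_add_norm_sub _ _ _
    _ = ‖T (u - τ) z - T 0 z‖ + ‖T τ z - T 0 z‖ := by
        rw [S.norm_apply_add_sub_apply_eq hw hz ht0 htz ht hτ0 hvu]
    _ ≤ 2 * ε := by linarith [hsmall (u - τ) ⟨hvu, by linarith [hu.2]⟩]

theorem le_of_tendsto_interval_average_norm_sub [NormedSpace ℝ E] [CompleteSpace E]
    (hC : Bornology.IsBounded C) (ht : Tendsto t atTop atTop) {s : ℕ → ℝ} (hs0 : ∀ k, 0 < s k)
    (hs : Tendsto s atTop atTop) {L L' : ℝ}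
    (havg : Tendsto (fun k => ⨍ u in (0 : ℝ)..s k, T u w) atTop (𝓝 w))
    (hL : Tendsto (fun k => ⨍ u in (0 : ℝ)..s k, ‖T u w - w‖) atTop (𝓝 L))
    (hL' : Tendsto (fun k => ⨍ u in (0 : ℝ)..s k, ‖T u z - T 0 z‖) atTop (𝓝 L')) :
    L ≤ L' := by
  have hzL' : ∀ v ≥ 0, ‖T v z - w‖ ≤ L' := fun v hv =>
    norm_sub_le_of_tendsto_interval_average (S.continuousOn z hz)
      ((S.continuousOn z hz).sub continuousOn_const).norm (fun _ _ => norm_nonneg _)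
      (fun a b ha hab => by
        have := S.norm_apply_add_sub_apply_eq hw hz ht0 htz ht ha (sub_nonneg.2 hab)
        rw [add_sub_cancel] at this
        exact this.le)
      (fun a ha b hb => norm_sub_le_diam hC (S.apply_mem ha hz) (S.apply_mem hb hz)) hs0 hs
      (S.tendsto_interval_average_apply hw hz ht0 htz hC hs0 hs havg) hL' hv
  refine le_of_forall_pos_le_add fun ε hε => ?_
  obtain ⟨j, hj⟩ := (Metric.tendsto_nhds.1 htz ε hε).exists
  refine le_of_tendsto_interval_average ((S.continuousOn w hw).sub continuousOn_const).norm
    (fun u hu => norm_sub_le_diam hC (S.apply_mem hu hw) hw) (ht0 j) (fun u hu => ?_) hs0 hs hL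
  have hu' : 0 ≤ u - t j := sub_nonneg.2 hu
  calc ‖T u w - w‖ ≤ ‖T ((u - t j) + t j) w - T (u - t j) z‖ + ‖T (u - t j) z - w‖ := by
        rw [sub_add_cancel]
        exact norm_sub_le_norm_sub_add_norm_sub _ _ _
    _ ≤ ε + L' := add_le_add ((S.norm_apply_add_sub_apply_le hw hz (ht0 j) hu').trans
        (by rw [← dist_eq_norm]; exact hj.le)) (hzL' _ hu')
    _ = L' + ε := add_comm _ _

end OmegaLimit

theorem apply_eq_self_of_tendsto_interval_average [NormedSpace ℝ E] [CompleteSpace E]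
    (hC : IsCompact C) {w : E} (hw : w ∈ C) {s : ℕ → ℝ} (hs0 : ∀ k, 0 < s k)
    (hs : Tendsto s atTop atTop)
    (havg : Tendsto (fun k => ⨍ u in (0 : ℝ)..s k, T u w) atTop (𝓝 w)) {τ : ℝ} (hτ : 0 ≤ τ) :
    T τ w = w := by
  have hCb := hC.isBounded
  obtain ⟨z, hz, ψ, hψ, htz⟩ :=
    hC.tendsto_subseq (x := fun j : ℕ => T j w) fun j => S.apply_mem (Nat.cast_nonneg j) hw
  set t : ℕ → ℝ := fun j => (ψ j : ℝ)
  have ht0 : ∀ j, 0 ≤ t j := fun j => Nat.cast_nonneg _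
  have ht : Tendsto t atTop atTop := tendsto_natCast_atTop_atTop.comp hψ.tendsto_atTop
  have hF : ContinuousOn (fun u => ‖T u w - w‖) (Ici 0) :=
    ((S.continuousOn w hw).sub continuousOn_const).norm
  have hlam : ContinuousOn (fun v => ‖T v z - T 0 z‖) (Ici 0) :=
    ((S.continuousOn z hz).sub continuousOn_const).norm
  obtain ⟨L, ψ₁, hψ₁, hL⟩ := exists_subseq_tendsto_interval_average
    (fun u hu => (abs_norm _).trans_le (norm_sub_le_diam hCb (S.apply_mem hu hw) hw)) hs0
  obtain ⟨L', ψ₂, hψ₂, hL'⟩ := exists_subseq_tendsto_interval_average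
    (fun v hv => (abs_norm _).trans_le (norm_sub_le_diam hCb (S.apply_mem hv hz)
      (S.apply_mem le_rfl hz))) fun k => hs0 (ψ₁ k)
  have hψ₁₂ := (hψ₁.comp hψ₂).tendsto_atTop
  have hs0' : ∀ k, 0 < s (ψ₁ (ψ₂ k)) := fun k => hs0 _
  have hs' := hs.comp hψ₁₂
  have havg' := havg.comp hψ₁₂
  have hL₂ := hL.comp hψ₂.tendsto_atTop
  have hFL : ∀ u ≥ 0, ‖T u w - w‖ ≤ L := fun u hu =>
    norm_sub_le_of_tendsto_interval_average (S.continuousOn w hw) hF (fun _ _ => norm_nonneg _)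
      (fun a b ha hab => S.norm_apply_sub_apply_le hw ha hab)
      (fun a ha b hb => norm_sub_le_diam hCb (S.apply_mem ha hw) (S.apply_mem hb hw))
      hs0' hs' havg' hL₂ hu
  have hLL' : L ≤ L' :=
    S.le_of_tendsto_interval_average_norm_sub hw hz ht0 htz hCb ht hs0' hs' havg' hL₂ hL'
  have hsmall : ∀ ε > 0, L ≤ 2 * ε := fun ε hε => by
    obtain ⟨η, hη, W, hηW, hwin⟩ := S.exists_hasLowWindows hw hz ht0 htz hC ht hε
    exact le_of_tendsto_interval_average_of_windows hlam
      (fun v hv => (S.norm_apply_sub_apply_zero_le hw hz ht0 htz hv).trans (hFL v hv)) hwin hη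
      (hη.trans_le hηW) hs0' hs' hL' hLL'
  have hzero : ‖T τ w - w‖ ≤ 0 := le_of_forall_pos_le_add fun ε hε => by
    linarith [hFL τ hτ, hsmall (ε / 2) (by positivity)]
  exact sub_eq_zero.1 (norm_le_zero_iff.1 hzero)

theorem norm_interval_average_sub_interval_average_le [NormedSpace ℝ E] [CompleteSpace E]
    (hC : Bornology.IsBounded C) {x x' : E} (hx : x ∈ C) (hx' : x' ∈ C) {τ τ' : ℝ} (hτ : 0 < τ)
    (hτ' : 0 < τ') :
    ‖(⨍ u in (0 : ℝ)..τ', T u x') - ⨍ u in (0 : ℝ)..τ, T u x‖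
      ≤ ‖x' - x‖ + Metric.diam C * |τ' / τ - 1| := by
  have h₁ := S.norm_interval_average_sub_le hx' hx hτ'
  have h₂ := norm_interval_average_sub_le_mul_abs (S.continuousOn x hx)
    (fun a ha b hb => norm_sub_le_diam hC (S.apply_mem ha hx) (S.apply_mem hb hx)) hτ hτ'
  exact (norm_sub_le_norm_sub_add_norm_sub _ _ _).trans (add_le_add h₁ h₂)

theorem norm_mann_step_sub_le [NormedSpace ℝ E] [CompleteSpace E] {w : E}
    (hw : ∀ t, 0 ≤ t → T t w = w) {x : E} (hx : x ∈ C) (hwC : w ∈ C) {τ β : ℝ} (hτ : 0 < τ)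
    (hβ : β ∈ Icc (0 : ℝ) 1) :
    ‖β • (⨍ u in (0 : ℝ)..τ, T u x) + (1 - β) • x - w‖ ≤ ‖x - w‖ := by
  have hyw : ‖(⨍ u in (0 : ℝ)..τ, T u x) - w‖ ≤ ‖x - w‖ := by
    simpa [interval_average_zero_eq_of_forall hτ fun u hu => hw u hu.1] using
      S.norm_interval_average_sub_le hx hwC hτ
  have hsplit : β • (⨍ u in (0 : ℝ)..τ, T u x) + (1 - β) • x - w
      = β • ((⨍ u in (0 : ℝ)..τ, T u x) - w) + (1 - β) • (x - w) := by module
  rw [hsplit]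
  calc _ ≤ β * ‖(⨍ u in (0 : ℝ)..τ, T u x) - w‖ + (1 - β) * ‖x - w‖ := by
        refine (norm_add_le _ _).trans_eq ?_
        rw [norm_smul, norm_smul, Real.norm_of_nonneg hβ.1,
          Real.norm_of_nonneg (sub_nonneg.2 hβ.2)]
    _ ≤ β * ‖x - w‖ + (1 - β) * ‖x - w‖ := by gcongr; exact hβ.1
    _ = ‖x - w‖ := by ring

theorem exists_tendsto_subseq_of_frequently [NormedSpace ℝ E] [CompleteSpace E]
    (hC : IsCompact C) {x : ℕ → E} {τ : ℕ → ℝ} (hτ : ∀ n, 0 < τ n) (hx : ∀ᶠ n in atTop, x n ∈ C)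
    (hres : ∀ ε > 0, ∃ᶠ n in atTop, ‖(⨍ u in (0 : ℝ)..τ n, T u (x n)) - x n‖ < ε) :
    ∃ w ∈ C, ∃ ψ : ℕ → ℕ, StrictMono ψ ∧ Tendsto (x ∘ ψ) atTop (𝓝 w) ∧
      Tendsto (fun k => ⨍ u in (0 : ℝ)..τ (ψ k), T u w) atTop (𝓝 w) := by
  obtain ⟨ν, hν, hνP⟩ := extraction_forall_of_frequently fun k =>
    (hres (1 / ((k : ℝ) + 1)) (by positivity)).and_eventually hx
  obtain ⟨w, hwC, φ, hφ, hxw⟩ := hC.tendsto_subseq fun k => (hνP k).2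
  refine ⟨w, hwC, ν ∘ φ, hν.comp hφ, hxw, ?_⟩
  have hres0 : Tendsto (fun k => ‖(⨍ u in (0 : ℝ)..τ (ν (φ k)), T u (x (ν (φ k))))
      - x (ν (φ k))‖) atTop (𝓝 0) :=
    squeeze_zero (fun _ => norm_nonneg _) (fun k => (hνP (φ k)).1.le)
      (tendsto_one_div_add_atTop_nhds_zero_nat.comp hφ.tendsto_atTop)
  have hxw0 := tendsto_iff_norm_sub_tendsto_zero.1 hxw
  refine tendsto_iff_norm_sub_tendsto_zero.2 <| squeeze_zero (fun _ => norm_nonneg _)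
    (fun k => ?_) (by simpa using (hxw0.const_mul 2).add hres0)
  set xk := x (ν (φ k))
  have h₁ := S.norm_interval_average_sub_le hwC (hνP (φ k)).2 (hτ (ν (φ k)))
  have h₂ := norm_sub_le_norm_sub_add_norm_sub (⨍ u in (0 : ℝ)..τ (ν (φ k)), T u w)
    (⨍ u in (0 : ℝ)..τ (ν (φ k)), T u xk) w
  have h₃ := norm_sub_le_norm_sub_add_norm_sub (⨍ u in (0 : ℝ)..τ (ν (φ k)), T u xk) xk w
  rw [norm_sub_rev w] at h₁
  simp only [Function.comp_apply]
  linarith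

theorem mem_of_mann [NormedSpace ℝ E] [CompleteSpace E] (hC : IsClosed C) (hCconv : Convex ℝ C)
    {x : ℕ → E} {α τ : ℕ → ℝ} (hτ : ∀ n, 0 < τ n) (hα : ∀ n, α n ∈ Icc (0 : ℝ) 1)
    (hx1 : x 1 ∈ C)
    (hrec : ∀ n ≥ 1, x (n + 1) = α n • (⨍ u in (0 : ℝ)..τ n, T u (x n)) + (1 - α n) • x n) :
    ∀ n ≥ 1, x n ∈ C := fun n hn => by
  induction n, hn using Nat.le_induction with
  | base => exact hx1
  | succ n hn ih =>
    rw [hrec n hn]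
    exact hCconv (S.interval_average_mem hC hCconv ih (hτ n)) ih (hα n).1 (sub_nonneg.2 (hα n).2)
      (by ring)

theorem frequently_norm_interval_average_sub_lt [NormedSpace ℝ E] [CompleteSpace E]
    (hC : IsCompact C) (hCconv : Convex ℝ C) {x : ℕ → E} {α τ : ℕ → ℝ} (hτ : ∀ n, 0 < τ n)
    (hτratio : Tendsto (fun n => τ (n + 1) / τ n) atTop (𝓝 1)) {a b : ℝ} (ha : 0 < a)
    (hb : b < 1) (hab : ∀ᶠ n in atTop, α n ∈ Icc a b) (hx : ∀ n ≥ 1, x n ∈ C)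
    (hrec : ∀ n ≥ 1, x (n + 1) = α n • (⨍ u in (0 : ℝ)..τ n, T u (x n)) + (1 - α n) • x n)
    {ε : ℝ} (hε : 0 < ε) : ∃ᶠ n in atTop, ‖(⨍ u in (0 : ℝ)..τ n, T u (x n)) - x n‖ < ε :=
  frequently_norm_sub_lt_of_mann hC.isBounded ((eventually_ge_atTop 1).mono hx)
    ((eventually_ge_atTop 1).mono fun n hn =>
      S.interval_average_mem hC.isClosed hCconv (hx n hn) (hτ n)) ha hb hab
    ((eventually_ge_atTop 1).mono hrec)
    ((eventually_ge_atTop 1).mono fun n hn =>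
      S.norm_interval_average_sub_interval_average_le hC.isBounded (hx n hn)
        (hx (n + 1) (by omega)) (hτ n) (hτ (n + 1)))
    (by simpa using ((hτratio.sub_const 1).abs).const_mul (Metric.diam C)) hε

end IsNonexpansiveSemigroup

theorem stmt16_general {E : Type*} [NormedAddCommGroup E] [NormedSpace ℝ E] [CompleteSpace E]
    (C : Set E) (hCcpt : IsCompact C) (hCconv : Convex ℝ C)
    (T : ℝ → E → E)
    (hmaps : ∀ t : ℝ, 0 ≤ t → Set.MapsTo (T t) C C)
    (hne : ∀ t : ℝ, 0 ≤ t → ∀ x ∈ C, ∀ y ∈ C, ‖T t x - T t y‖ ≤ ‖x - y‖)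
    (hsg : ∀ s t : ℝ, 0 ≤ s → 0 ≤ t → ∀ x ∈ C, T (s + t) x = T s (T t x))
    (hcont : ∀ x ∈ C, ContinuousOn (fun t : ℝ => T t x) (Set.Ici 0))
    (tn : ℕ → ℝ) (htn0 : ∀ n, 0 < tn n)
    (htninf : Tendsto tn atTop atTop)
    (htnratio : Tendsto (fun n => tn (n + 1) / tn n) atTop (nhds 1))
    (α : ℕ → ℝ) (hα : ∀ n, α n ∈ Set.Icc (0 : ℝ) 1)
    (h₁ : 0 < liminf α atTop) (h₂ : limsup α atTop < 1)
    (x : ℕ → E) (hx1 : x 1 ∈ C)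
    (hrec : ∀ n ≥ 1, x (n + 1) =
      (α n / tn n) • (∫ s in (0 : ℝ)..tn n, T s (x n)) + (1 - α n) • x n) :
    ∃ z ∈ C, (∀ t : ℝ, 0 ≤ t → T t z = z) ∧ Tendsto x atTop (nhds z) := by
  have S : IsNonexpansiveSemigroup C T := ⟨hmaps, hne, hsg, hcont⟩
  have hrec' : ∀ n ≥ 1, x (n + 1) = α n • (⨍ u in (0 : ℝ)..tn n, T u (x n)) + (1 - α n) • x n :=
    fun n hn => by rw [hrec n hn, interval_average_zero_eq, smul_smul, div_eq_mul_inv]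
  have hxC := S.mem_of_mann hCcpt.isClosed hCconv htn0 hα hx1 hrec'
  obtain ⟨a, b, ha, hb, hab⟩ := exists_eventually_mem_Icc_of_liminf_pos hα h₁ h₂
  obtain ⟨w, hwC, ψ, hψ, hxw, havg⟩ := S.exists_tendsto_subseq_of_frequently hCcpt htn0
    ((eventually_ge_atTop 1).mono hxC) fun ε hε =>
      S.frequently_norm_interval_average_sub_lt hCcpt hCconv htn0 htnratio ha hb hab hxC hrec' hε
  have hfix : ∀ t, 0 ≤ t → T t w = w := fun t ht =>
    S.apply_eq_self_of_tendsto_interval_average hCcpt hwC (fun k => htn0 _)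
      (htninf.comp hψ.tendsto_atTop) havg ht
  refine ⟨w, hwC, hfix, tendsto_of_tendsto_subseq_of_norm_sub_le (N := 1) (fun n hn => ?_) hψ hxw⟩
  rw [hrec' n hn]
  exact S.norm_mann_step_sub_le hfix (hxC n hn) hwC (htn0 n) (hα n)

/-- Let `C` be a nonempty compact convex subset of a Banach space `E` and
`{T(t) : t ≥ 0}` a one-parameter strongly continuous semigroup of nonexpansive
mappings on `C`.  For `t_n ∈ (0,∞)` with `t_n → ∞`, `t_{n+1}/t_n → 1`, and
`α_n ∈ [0,1]` with `0 < liminf α_n ≤ limsup α_n < 1`, the iteration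
`x_{n+1} = (α_n/t_n) ∫_0^{t_n} T(s) x_n ds + (1 - α_n) x_n` starting from
`x_1 ∈ C` converges strongly to a common fixed point of `{T(t) : t ≥ 0}`. -/
theorem stmt16 {E : Type*} [NormedAddCommGroup E] [NormedSpace ℝ E] [CompleteSpace E]
    (C : Set E) (hCne : C.Nonempty) (hCcpt : IsCompact C) (hCconv : Convex ℝ C)
    (T : ℝ → E → E)
    (hmaps : ∀ t : ℝ, 0 ≤ t → Set.MapsTo (T t) C C)
    (hne : ∀ t : ℝ, 0 ≤ t → ∀ x ∈ C, ∀ y ∈ C, ‖T t x - T t y‖ ≤ ‖x - y‖)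
    (hsg : ∀ s t : ℝ, 0 ≤ s → 0 ≤ t → ∀ x ∈ C, T (s + t) x = T s (T t x))
    (hcont : ∀ x ∈ C, ContinuousOn (fun t : ℝ => T t x) (Set.Ici 0))
    (tn : ℕ → ℝ) (htn0 : ∀ n, 0 < tn n)
    (htninf : Tendsto tn atTop atTop)
    (htnratio : Tendsto (fun n => tn (n + 1) / tn n) atTop (nhds 1))
    (α : ℕ → ℝ) (hα : ∀ n, α n ∈ Set.Icc (0 : ℝ) 1)
    (h₁ : 0 < liminf α atTop) (h₂ : limsup α atTop < 1)
    (x : ℕ → E) (hx1 : x 1 ∈ C)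
    (hrec : ∀ n ≥ 1, x (n + 1) =
      (α n / tn n) • (∫ s in (0 : ℝ)..tn n, T s (x n)) + (1 - α n) • x n) :
    ∃ z ∈ C, (∀ t : ℝ, 0 ≤ t → T t z = z) ∧ Tendsto x atTop (nhds z) :=
  stmt16_general C hCcpt hCconv T hmaps hne hsg hcont tn htn0 htninf htnratio α hα h₁ h₂ x hx1 hrec
end
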